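/- arXiv:math/0403204 — 3 statements merged into one kernel-verified Lean document; each statement's English description precedes it below -/
import Mathlib

section
/- Let f : R → S be a ring homomorphism such that every semiprime factor ring of R and of S is left or right Goldie and the prime radical of every factor ring of R and of S is nilpotent. Then λ is a left adjoint to ρ if and only if the following two conditions hold: (a) the correspondence r is a single-valued continuous function, i.e., for every P ∈ Spec S there is exactly one prime ideal of R minimal over f^{-1}(P), and the resulting function Spec S → Spec R is continuous; and (b) r^{[-1]}V_R(I) = V_S(I^S) for every ideal I of R. -/
/-- A two-sided ideal `P` of `A` is prime: it is proper, and for all two-sided ideals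
`I, J`, `IJ ⊆ P` implies `I ⊆ P` or `J ⊆ P` (the product condition is expressed
elementwise on generators, which is equivalent since `P` is closed under addition). -/
def IsPrimeTwoSided {A : Type*} [Ring A] (P : TwoSidedIdeal A) : Prop :=
  P ≠ ⊤ ∧ ∀ I J : TwoSidedIdeal A, (∀ a ∈ I, ∀ b ∈ J, a * b ∈ P) → I ≤ P ∨ J ≤ P

/-- `V_A(X)`: the Zariski-closed subset of `Spec A` determined by `X ⊆ A`. -/
def zarV {A : Type*} [Ring A] (X : Set A) : Set (TwoSidedIdeal A) :=
  {P | IsPrimeTwoSided P ∧ X ⊆ (P : Set A)}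

/-- The prime radical of a subset `X ⊆ A`: the intersection of all prime (two-sided)
ideals containing `X`. -/
def primeRad {A : Type*} [Ring A] (X : Set A) : Set A :=
  {a | ∀ P : TwoSidedIdeal A, IsPrimeTwoSided P → X ⊆ (P : Set A) → a ∈ P}

/-- `Q` is a prime ideal of `A` minimal over the subset `X`. -/
def minimalOver {A : Type*} [Ring A] (X : Set A) (Q : TwoSidedIdeal A) : Prop :=
  IsPrimeTwoSided Q ∧ X ⊆ (Q : Set A) ∧
    ∀ Q' : TwoSidedIdeal A, IsPrimeTwoSided Q' → X ⊆ (Q' : Set A) → Q' ≤ Q → Q' = Q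

/-- The canonical correspondence `r : Spec S → Spec R` attached to `f : R →+* S`,
sending `P` to the set of primes of `R` minimal over `f⁻¹(P)`. -/
def rCorr {R S : Type*} [Ring R] [Ring S] (f : R →+* S) (P : TwoSidedIdeal S) :
    Set (TwoSidedIdeal R) :=
  {Q | minimalOver (f ⁻¹' (P : Set S)) Q}

/-- A (finite) family of submodules is independent: each member meets the supremum of
the others trivially. -/
def FamIndep {R M : Type*} [Ring R] [AddCommGroup M] [Module R M] {k : ℕ}
    (g : Fin k → Submodule R M) : Prop :=
  ∀ i, g i ⊓ (⨆ j ∈ ({i}ᶜ : Set (Fin k)), g j) = ⊥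

/-- The uniform (Goldie) dimension of the left `R`-module `M` is at most `n`: every
independent family of nonzero submodules has at most `n` members. -/
def UDimLE (R M : Type*) [Ring R] [AddCommGroup M] [Module R M] (n : ℕ) : Prop :=
  ∀ (k : ℕ) (g : Fin k → Submodule R M), (∀ i, g i ≠ ⊥) → FamIndep g → k ≤ n

/-- ACC on left annihilators (of subsets) in `A`. -/
def ACCLeftAnn (A : Type*) [Ring A] : Prop :=
  ∀ c : ℕ → Set A, (∀ i, ∃ T : Set A, c i = {a | ∀ t ∈ T, a * t = 0}) →
    (∀ i, c i ⊆ c (i + 1)) → ∃ N, ∀ m, N ≤ m → c m = c N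

/-- `A` is a left Goldie ring: finite uniform dimension as a left module over itself and
ACC on left annihilators. -/
def LeftGoldie (A : Type*) [Ring A] : Prop :=
  (∃ n, UDimLE A A n) ∧ ACCLeftAnn A

/-- `A` is a left or right Goldie ring (right Goldie = the opposite ring is left Goldie). -/
def LeftOrRightGoldie (A : Type*) [Ring A] : Prop :=
  LeftGoldie A ∨ LeftGoldie Aᵐᵒᵖ

/-- The prime radical of the ring `A` (the intersection of all its prime ideals, i.e.
`primeRad ∅`) is nilpotent. -/
def NilpotentPrimeRad (A : Type*) [Ring A] : Prop :=
  ∃ n : ℕ, 0 < n ∧ ∀ l : List A, l.length = n →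
    (∀ x ∈ l, x ∈ primeRad (∅ : Set A)) → l.prod = 0

/-- Every semiprime factor ring of `A` is left or right Goldie. -/
def SemiprimeFactorsGoldie (A : Type*) [Ring A] : Prop :=
  ∀ I : TwoSidedIdeal A, primeRad (I : Set A) = (I : Set A) →
    LeftOrRightGoldie I.ringCon.Quotient

/-- The prime radical of every factor ring of `A` is nilpotent. -/
def FactorRadsNilpotent (A : Type*) [Ring A] : Prop :=
  ∀ I : TwoSidedIdeal A, NilpotentPrimeRad I.ringCon.Quotient

/-- `X^S = ann_S(S/Sf(X))`, the annihilator in `S` of the left `S`-module `S/Sf(X)`;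
here `Sf(X)` is the left ideal of `S` generated by `f(X)`. -/
def extSet {R S : Type*} [Ring R] [Ring S] (f : R →+* S) (X : Set R) : Set S :=
  {a : S | ∀ s : S, a * s ∈ Ideal.span (f '' X)}

/-- `λ` is a left adjoint to `ρ`: for all closed `V = V_S(J) ⊆ Spec S` and
`W = V_R(I) ⊆ Spec R` (`J`, `I` semiprime), `λV ⊆ W ↔ V ⊆ ρW`, where
`λ(V_S(J)) = V_R(f⁻¹(J))` and `ρ(V_R(I)) = V_S(I^S)`. -/
def LambdaLeftAdjointRho {R S : Type*} [Ring R] [Ring S] (f : R →+* S) : Prop :=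
  ∀ J : TwoSidedIdeal S, primeRad (J : Set S) = (J : Set S) →
  ∀ I : TwoSidedIdeal R, primeRad (I : Set R) = (I : Set R) →
    (zarV (f ⁻¹' (J : Set S)) ⊆ zarV (I : Set R) ↔
      zarV (J : Set S) ⊆ zarV (extSet f (I : Set R)))

set_option maxHeartbeats 1000000

namespace St3

variable {A : Type*} [Ring A]

lemma eq_top_of_one_mem {P : TwoSidedIdeal A} (h : (1:A) ∈ P) : P = ⊤ := by
  refine TwoSidedIdeal.ext fun x => ⟨fun _ => TwoSidedIdeal.mem_top _, fun _ => ?_⟩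
  simpa using P.mul_mem_left x 1 h

lemma not_one_mem {P : TwoSidedIdeal A} (hP : IsPrimeTwoSided P) : (1:A) ∉ P :=
  fun h => hP.1 (eq_top_of_one_mem h)

lemma isPrime_of_pair {P : TwoSidedIdeal A} (h1 : (1:A) ∉ P)
    (h : ∀ I J : TwoSidedIdeal A, (∀ a ∈ I, ∀ b ∈ J, a * b ∈ P) → I ≤ P ∨ J ≤ P) :
    IsPrimeTwoSided P :=
  ⟨fun ht => h1 (ht ▸ TwoSidedIdeal.mem_top _), h⟩

/-- key elementwise criterion -/
lemma prime_pair {P : TwoSidedIdeal A} (hP : IsPrimeTwoSided P) {a b : A}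
    (h : ∀ x, a * x * b ∈ P) : a ∈ P ∨ b ∈ P := by
  set Ia : TwoSidedIdeal A := TwoSidedIdeal.mk' {r | ∀ x, r * x * b ∈ P}
    (fun x => by simpa using P.zero_mem)
    (fun {r s} hr hs x => by
      have := P.add_mem (hr x) (hs x); simpa [add_mul] using this)
    (fun {r} hr x => by have := P.neg_mem (hr x); simpa [neg_mul] using this)
    (fun {x y} hy z => by
      have := P.mul_mem_left x (y * z * b) (hy z); simpa [mul_assoc] using this)
    (fun {x y} hx z => by
      have := hx (y * z); simpa [mul_assoc] using this) with hIa
  set Jb : TwoSidedIdeal A := TwoSidedIdeal.mk' {r | ∀ s ∈ Ia, s * r ∈ P}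
    (fun s _ => by simpa using P.zero_mem)
    (fun {r t} hr ht s hs => by
      have := P.add_mem (hr s hs) (ht s hs); simpa [mul_add] using this)
    (fun {r} hr s hs => by have := P.neg_mem (hr s hs); simpa [mul_neg] using this)
    (fun {x y} hy s hs => by
      have hsx : s * x ∈ Ia := Ia.mul_mem_right s x hs
      have := hy (s * x) hsx; simpa [mul_assoc] using this)
    (fun {x y} hx s hs => by
      have : s * x ∈ P := hx s hs
      have := P.mul_mem_right (s * x) y this; simpa [mul_assoc] using this) with hJb
  have hij : ∀ u ∈ Ia, ∀ v ∈ Jb, u * v ∈ P := by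
    intro u hu v hv
    rw [hJb, TwoSidedIdeal.mem_mk'] at hv
    exact hv u hu
  rcases hP.2 Ia Jb hij with hle | hle
  · left
    have ha : a ∈ Ia := by rw [hIa, TwoSidedIdeal.mem_mk']; exact h
    exact hle ha
  · right
    have hb : b ∈ Jb := by
      rw [hJb, TwoSidedIdeal.mem_mk']
      intro s hs
      rw [hIa, TwoSidedIdeal.mem_mk'] at hs
      simpa using hs 1
    exact hle hb

lemma list_prod_mem {P : TwoSidedIdeal A} :
    ∀ (l : List A), (∃ x ∈ l, x ∈ P) → l.prod ∈ P := by
  intro l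
  induction l with
  | nil => rintro ⟨x, hx, -⟩; simp at hx
  | cons a l ih =>
    rintro ⟨x, hx, hxP⟩
    rcases List.mem_cons.mp hx with rfl | hx
    · simpa using P.mul_mem_right x l.prod hxP
    · simpa using P.mul_mem_left a l.prod (ih ⟨x, hx, hxP⟩)

/-- if all pure products over a family of ideals land in a prime, some ideal is below it -/
lemma prime_of_prod {P : TwoSidedIdeal A} (hP : IsPrimeTwoSided P) :
    ∀ {t : ℕ} (T : Fin t → TwoSidedIdeal A),
      (∀ g : Fin t → A, (∀ i, g i ∈ T i) → (List.ofFn g).prod ∈ P) → ∃ i, T i ≤ P := by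
  intro t
  induction t with
  | zero =>
    intro T h
    exact absurd (eq_top_of_one_mem (by simpa using h (fun i => i.elim0) (fun i => i.elim0)))
      hP.1
  | succ t ih =>
    intro T h
    by_cases h0 : T 0 ≤ P
    · exact ⟨0, h0⟩
    · obtain ⟨a, haT, haP⟩ : ∃ a ∈ T 0, a ∉ P := by
        rw [TwoSidedIdeal.le_iff, Set.not_subset] at h0; exact h0
      have key : ∀ g' : Fin t → A, (∀ i, g' i ∈ T i.succ) → (List.ofFn g').prod ∈ P := by
        intro g' hg'
        have hq : ∀ x, a * x * (List.ofFn g').prod ∈ P := by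
          intro x
          have hmem : ∀ i, (Fin.cons (a * x) g' : Fin (t+1) → A) i ∈ T i := by
            intro i
            refine Fin.cases ?_ ?_ i
            · simpa using T 0 |>.mul_mem_right a x haT
            · intro j; simpa using hg' j
          have := h (Fin.cons (a * x) g') hmem
          rw [List.ofFn_succ] at this
          simpa [mul_assoc] using this
        rcases prime_pair hP hq with h1 | h2
        · exact absurd h1 haP
        · exact h2
      obtain ⟨i, hi⟩ := ih (fun i => T i.succ) key
      exact ⟨i.succ, hi⟩

end St3

namespace St3
variable {A : Type*} [Ring A]

lemma subset_primeRad (X : Set A) : X ⊆ primeRad X := fun _ hx _ _ hXP => hXP hx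

lemma primeRad_subset {X : Set A} {P : TwoSidedIdeal A} (hP : IsPrimeTwoSided P)
    (hXP : X ⊆ (P : Set A)) : primeRad X ⊆ (P : Set A) := fun _ ha => ha P hP hXP

/-- the prime radical as a two-sided ideal -/
def radIdeal (X : Set A) : TwoSidedIdeal A :=
  TwoSidedIdeal.mk' (primeRad X)
    (fun P _ _ => P.zero_mem)
    (fun {x y} hx hy P hP hXP => P.add_mem (hx P hP hXP) (hy P hP hXP))
    (fun {x} hx P hP hXP => P.neg_mem (hx P hP hXP))
    (fun {x y} hy P hP hXP => P.mul_mem_left x y (hy P hP hXP))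
    (fun {x y} hx P hP hXP => P.mul_mem_right x y (hx P hP hXP))

@[simp] lemma coe_radIdeal (X : Set A) : ((radIdeal X : TwoSidedIdeal A) : Set A) = primeRad X :=
  TwoSidedIdeal.coe_mk' _ _ _ _ _ _

lemma radIdeal_semiprime (X : Set A) :
    primeRad ((radIdeal X : TwoSidedIdeal A) : Set A) = ((radIdeal X : TwoSidedIdeal A) : Set A) := by
  rw [coe_radIdeal]
  apply Set.Subset.antisymm
  · intro a ha P hP hXP
    exact ha P hP (primeRad_subset hP hXP)
  · exact subset_primeRad _

lemma prime_semiprime {P : TwoSidedIdeal A} (hP : IsPrimeTwoSided P) :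
    primeRad (P : Set A) = (P : Set A) :=
  Set.Subset.antisymm (primeRad_subset hP subset_rfl) (subset_primeRad _)

/-- every prime over X contains a minimal prime over X -/
lemma exists_minimalOver {X : Set A} {Q : TwoSidedIdeal A} (hQ : IsPrimeTwoSided Q)
    (hXQ : X ⊆ (Q : Set A)) : ∃ Q₀, minimalOver X Q₀ ∧ Q₀ ≤ Q := by
  classical
  set 𝒮 : Set (Set A) :=
    {s | ∃ P : TwoSidedIdeal A, s = (P : Set A) ∧ IsPrimeTwoSided P ∧ X ⊆ (P : Set A) ∧ P ≤ Q}
    with h𝒮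
  have hQ𝒮 : (Q : Set A) ∈ 𝒮 := ⟨Q, rfl, hQ, hXQ, le_refl _⟩
  have hlb : ∀ c ⊆ 𝒮, IsChain (· ⊆ ·) c → c.Nonempty → ∃ lb ∈ 𝒮, ∀ s ∈ c, lb ⊆ s := ?_
  case _ =>
    obtain ⟨m, hm_sub, hm⟩ := zorn_superset_nonempty 𝒮 hlb _ hQ𝒮
    obtain ⟨P₀, rfl, hP₀, hXP₀, hP₀Q⟩ := hm.prop
    refine ⟨P₀, ⟨hP₀, hXP₀, ?_⟩, hP₀Q⟩
    intro Q' hQ' hXQ' hle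
    have hQ'𝒮 : (Q' : Set A) ∈ 𝒮 := ⟨Q', rfl, hQ', hXQ', le_trans hle hP₀Q⟩
    have := hm.eq_of_superset hQ'𝒮 (TwoSidedIdeal.le_iff.mp hle)
    exact (SetLike.ext' this).symm
  -- chains: intersection is a lower bound in 𝒮
  case _ =>
    intro c hc𝒮 hchain hne
    obtain ⟨s₀, hs₀⟩ := hne
    obtain ⟨P₀, rfl, hP₀, hXP₀, hP₀Q⟩ := hc𝒮 hs₀
    set K : TwoSidedIdeal A := TwoSidedIdeal.mk' (⋂₀ c)
      (fun s hs => by obtain ⟨P, rfl, _, _, _⟩ := hc𝒮 hs; exact P.zero_mem)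
      (fun {x y} hx hy s hs => by
        obtain ⟨P, rfl, _, _, _⟩ := hc𝒮 hs; exact P.add_mem (hx _ hs) (hy _ hs))
      (fun {x} hx s hs => by
        obtain ⟨P, rfl, _, _, _⟩ := hc𝒮 hs; exact P.neg_mem (hx _ hs))
      (fun {x y} hy s hs => by
        obtain ⟨P, rfl, _, _, _⟩ := hc𝒮 hs; exact P.mul_mem_left x y (hy _ hs))
      (fun {x y} hx s hs => by
        obtain ⟨P, rfl, _, _, _⟩ := hc𝒮 hs; exact P.mul_mem_right x y (hx _ hs)) with hK
    have hKcoe : (K : Set A) = ⋂₀ c := TwoSidedIdeal.coe_mk' _ _ _ _ _ _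
    have hKmem : ∀ x, x ∈ K ↔ ∀ s ∈ c, x ∈ s := by
      intro x; rw [hK]; exact (TwoSidedIdeal.mem_mk' ..).trans Set.mem_sInter
    refine ⟨(K : Set A), ⟨K, rfl, ?_, ?_, ?_⟩, fun s hs => by rw [hKcoe]; exact Set.sInter_subset_of_mem hs⟩
    · -- K is prime
      refine isPrime_of_pair ?_ ?_
      · intro h1
        exact not_one_mem hP₀ ((hKmem 1).mp h1 _ hs₀)
      · intro I J hIJ
        by_contra hcon
        push_neg at hcon
        obtain ⟨hI, hJ⟩ := hcon
        obtain ⟨a, haI, haK⟩ : ∃ a ∈ I, a ∉ K := by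
          rw [TwoSidedIdeal.le_iff, Set.not_subset] at hI; exact hI
        obtain ⟨b, hbJ, hbK⟩ : ∃ b ∈ J, b ∉ K := by
          rw [TwoSidedIdeal.le_iff, Set.not_subset] at hJ; exact hJ
        obtain ⟨s₁, hs₁c, has₁⟩ : ∃ s ∈ c, a ∉ s := by
          by_contra hc1; push_neg at hc1; exact haK ((hKmem a).mpr hc1)
        obtain ⟨s₂, hs₂c, hbs₂⟩ : ∃ s ∈ c, b ∉ s := by
          by_contra hc2; push_neg at hc2; exact hbK ((hKmem b).mpr hc2)
        -- take the smaller of s₁, s₂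
        have hsmall : ∃ s ∈ c, a ∉ s ∧ b ∉ s := by
          rcases hchain.total hs₁c hs₂c with h12 | h21
          · exact ⟨s₁, hs₁c, has₁, fun hb => hbs₂ (h12 hb)⟩
          · exact ⟨s₂, hs₂c, fun ha => has₁ (h21 ha), hbs₂⟩
        obtain ⟨s, hsc, has, hbs⟩ := hsmall
        obtain ⟨P, rfl, hP, hXP, hPQ⟩ := hc𝒮 hsc
        have hsub : ∀ x ∈ K, x ∈ P := fun x hx => (hKmem x).mp hx _ hsc
        rcases hP.2 I J (fun a ha b hb => hsub _ (hIJ a ha b hb)) with h | h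
        · exact has (h haI)
        · exact hbs (h hbJ)
    · -- X ⊆ K
      intro x hx
      refine (hKmem x).mpr fun s hs => ?_
      obtain ⟨P, rfl, _, hXP, _⟩ := hc𝒮 hs
      exact hXP hx
    · -- K ≤ Q
      rw [TwoSidedIdeal.le_iff, hKcoe]
      intro x hx
      have := Set.mem_sInter.mp hx _ hs₀
      exact TwoSidedIdeal.le_iff.mp hP₀Q this

/-- every proper ideal is contained in a prime ideal -/
lemma exists_prime_above (K : TwoSidedIdeal A) (hK : (1:A) ∉ K) :
    ∃ P : TwoSidedIdeal A, IsPrimeTwoSided P ∧ K ≤ P := by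
  classical
  set 𝒮 : Set (Set A) :=
    {s | ∃ P : TwoSidedIdeal A, s = (P : Set A) ∧ K ≤ P ∧ (1:A) ∉ P} with h𝒮
  have hK𝒮 : (K : Set A) ∈ 𝒮 := ⟨K, rfl, le_refl _, hK⟩
  have hub : ∀ c ⊆ 𝒮, IsChain (· ⊆ ·) c → c.Nonempty → ∃ ub ∈ 𝒮, ∀ s ∈ c, s ⊆ ub := ?_
  case _ =>
    obtain ⟨m, hKm, hm⟩ := zorn_subset_nonempty 𝒮 hub _ hK𝒮
    obtain ⟨M, rfl, hKM, h1M⟩ := hm.prop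
    refine ⟨M, isPrime_of_pair h1M ?_, hKM⟩
    intro I J hIJ
    by_cases hI : I ≤ M
    · exact Or.inl hI
    right
    obtain ⟨a, haI, haM⟩ : ∃ a ∈ I, a ∉ M := by
      rw [TwoSidedIdeal.le_iff, Set.not_subset] at hI; exact hI
    -- M + I
    set M' : TwoSidedIdeal A := TwoSidedIdeal.mk' {x | ∃ u ∈ M, ∃ v ∈ I, x = u + v}
      (⟨0, M.zero_mem, 0, I.zero_mem, by rw [add_zero]⟩)
      (fun {x y} ⟨u, hu, v, hv, hx⟩ ⟨u', hu', v', hv', hy⟩ =>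
        ⟨u + u', M.add_mem hu hu', v + v', I.add_mem hv hv', by rw [hx, hy]; abel⟩)
      (fun {x} ⟨u, hu, v, hv, hx⟩ => ⟨-u, M.neg_mem hu, -v, I.neg_mem hv, by rw [hx]; abel⟩)
      (fun {x y} ⟨u, hu, v, hv, hy⟩ =>
        ⟨x * u, M.mul_mem_left x u hu, x * v, I.mul_mem_left x v hv, by rw [hy, mul_add]⟩)
      (fun {x y} ⟨u, hu, v, hv, hx⟩ =>
        ⟨u * y, M.mul_mem_right u y hu, v * y, I.mul_mem_right v y hv, by rw [hx, add_mul]⟩)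
      with hM'
    have h1M' : (1:A) ∈ M' := by
      by_contra h1
      have hM'𝒮 : (M' : Set A) ∈ 𝒮 := ⟨M', rfl, ?_, h1⟩
      · have hMM' : (M : Set A) ⊆ (M' : Set A) := by
          intro x hx
          rw [hM', TwoSidedIdeal.coe_mk']
          exact ⟨x, hx, 0, I.zero_mem, (add_zero x).symm⟩
        have := hm.eq_of_subset hM'𝒮 hMM'
        apply haM
        have haM' : a ∈ M' := by
          rw [hM', TwoSidedIdeal.mem_mk']
          exact ⟨0, M.zero_mem, a, haI, (zero_add a).symm⟩
        rw [← SetLike.mem_coe, this, SetLike.mem_coe]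
        exact haM'
      · intro x hx
        rw [TwoSidedIdeal.mem_mk']
        exact ⟨x, hKM hx, 0, I.zero_mem, (add_zero x).symm⟩
    rw [hM', TwoSidedIdeal.mem_mk'] at h1M'
    obtain ⟨u, hu, v, hv, huv⟩ := h1M'
    intro b hb
    have : b = u * b + v * b := by rw [← add_mul, ← huv, one_mul]
    rw [TwoSidedIdeal.mem_iff] at *
    have h1 : u * b ∈ M := M.mul_mem_right u b hu
    have h2 : v * b ∈ M := hIJ v hv b hb
    rw [this]
    exact M.add_mem h1 h2
  case _ =>
    intro c hc𝒮 hchain hne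
    obtain ⟨s₀, hs₀⟩ := hne
    refine ⟨⋃₀ c, ⟨TwoSidedIdeal.mk' (⋃₀ c) ?_ ?_ ?_ ?_ ?_, (TwoSidedIdeal.coe_mk' _ _ _ _ _ _).symm, ?_, ?_⟩,
      fun s hs => Set.subset_sUnion_of_mem hs⟩
    · obtain ⟨P, rfl, _, _⟩ := hc𝒮 hs₀; exact ⟨_, hs₀, P.zero_mem⟩
    · rintro x y ⟨s₁, hs₁, hx⟩ ⟨s₂, hs₂, hy⟩
      rcases hchain.total hs₁ hs₂ with h | h
      · obtain ⟨P, rfl, _, _⟩ := hc𝒮 hs₂; exact ⟨_, hs₂, P.add_mem (h hx) hy⟩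
      · obtain ⟨P, rfl, _, _⟩ := hc𝒮 hs₁; exact ⟨_, hs₁, P.add_mem hx (h hy)⟩
    · rintro x ⟨s, hs, hx⟩
      obtain ⟨P, rfl, _, _⟩ := hc𝒮 hs; exact ⟨_, hs, P.neg_mem hx⟩
    · rintro x y ⟨s, hs, hy⟩
      obtain ⟨P, rfl, _, _⟩ := hc𝒮 hs; exact ⟨_, hs, P.mul_mem_left x y hy⟩
    · rintro x y ⟨s, hs, hx⟩
      obtain ⟨P, rfl, _, _⟩ := hc𝒮 hs; exact ⟨_, hs, P.mul_mem_right x y hx⟩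
    · rw [TwoSidedIdeal.le_iff, TwoSidedIdeal.coe_mk']
      obtain ⟨P, rfl, hKP, _⟩ := hc𝒮 hs₀
      exact fun x hx => ⟨_, hs₀, hKP hx⟩
    · intro hmem
      rw [TwoSidedIdeal.mem_mk'] at hmem
      obtain ⟨s, hs, h1⟩ := hmem
      obtain ⟨P, rfl, _, h1P⟩ := hc𝒮 hs
      exact h1P h1
end St3
namespace St3
section Quot
variable {A : Type*} [Ring A] (I : TwoSidedIdeal A)

local notation "π" => RingCon.mk' I.ringCon

lemma pi_eq_zero_iff (x : A) : (RingCon.mk' I.ringCon) x = 0 ↔ x ∈ I := by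
  have : ((x : I.ringCon.Quotient) = (0:A)) ↔ I.ringCon x 0 := RingCon.eq _
  rw [show ((RingCon.mk' I.ringCon) x = 0) ↔ ((x : I.ringCon.Quotient) = (0:A)) from Iff.rfl]
  rw [this, I.rel_iff, sub_zero]

lemma pi_surj : Function.Surjective (RingCon.mk' I.ringCon) :=
  fun b => by
    obtain ⟨x, hx⟩ := Quot.exists_rep b
    exact ⟨x, hx⟩

/-- pullback of a two-sided ideal along the quotient map -/
def pbQ (P : TwoSidedIdeal I.ringCon.Quotient) : TwoSidedIdeal A :=
  TwoSidedIdeal.mk' ((RingCon.mk' I.ringCon) ⁻¹' (P : Set I.ringCon.Quotient))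
    (by simp only [Set.mem_preimage, map_zero]; exact P.zero_mem)
    (fun {x y} hx hy => by
      simp only [Set.mem_preimage, map_add] at *; exact P.add_mem hx hy)
    (fun {x} hx => by simp only [Set.mem_preimage, map_neg] at *; exact P.neg_mem hx)
    (fun {x y} hy => by
      simp only [Set.mem_preimage, map_mul] at *; exact P.mul_mem_left _ _ hy)
    (fun {x y} hx => by
      simp only [Set.mem_preimage, map_mul] at *; exact P.mul_mem_right _ _ hx)

lemma mem_pbQ {P : TwoSidedIdeal I.ringCon.Quotient} (x : A) :
    x ∈ pbQ I P ↔ (RingCon.mk' I.ringCon) x ∈ P := by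
  rw [pbQ, TwoSidedIdeal.mem_mk']; rfl

/-- pushforward of a two-sided ideal along the quotient map -/
def pfQ (P : TwoSidedIdeal A) : TwoSidedIdeal I.ringCon.Quotient :=
  TwoSidedIdeal.mk' ((RingCon.mk' I.ringCon) '' (P : Set A))
    (⟨0, P.zero_mem, map_zero _⟩)
    (fun {x y} ⟨u, hu, hux⟩ ⟨v, hv, hvy⟩ =>
      ⟨u + v, P.add_mem hu hv, by rw [map_add, hux, hvy]⟩)
    (fun {x} ⟨u, hu, hux⟩ => ⟨-u, P.neg_mem hu, by rw [map_neg, hux]⟩)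
    (fun {x y} ⟨v, hv, hvy⟩ => by
      obtain ⟨u, rfl⟩ := pi_surj I x
      exact ⟨u * v, P.mul_mem_left u v hv, by rw [map_mul, hvy]⟩)
    (fun {x y} ⟨u, hu, hux⟩ => by
      obtain ⟨v, rfl⟩ := pi_surj I y
      exact ⟨u * v, P.mul_mem_right u v hu, by rw [map_mul, hux]⟩)

lemma mem_pfQ {P : TwoSidedIdeal A} (b : I.ringCon.Quotient) :
    b ∈ pfQ I P ↔ ∃ x ∈ P, (RingCon.mk' I.ringCon) x = b := by
  rw [pfQ]; exact TwoSidedIdeal.mem_mk' ..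

lemma pbQ_prime {P : TwoSidedIdeal I.ringCon.Quotient} (hP : IsPrimeTwoSided P) :
    IsPrimeTwoSided (pbQ I P) := by
  refine isPrime_of_pair (fun h1 => ?_) ?_
  · rw [mem_pbQ, map_one] at h1
    exact not_one_mem hP h1
  · intro U V hUV
    have hUV' : ∀ a ∈ pfQ I U, ∀ b ∈ pfQ I V, a * b ∈ P := by
      intro a ha b hb
      rw [mem_pfQ] at ha hb
      obtain ⟨u, hu, rfl⟩ := ha
      obtain ⟨v, hv, rfl⟩ := hb
      rw [← map_mul]
      exact (mem_pbQ I _).mp (hUV u hu v hv)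
    rcases hP.2 _ _ hUV' with h | h
    · left; intro u hu
      exact (mem_pbQ I u).mpr (h ((mem_pfQ I _).mpr ⟨u, hu, rfl⟩))
    · right; intro v hv
      exact (mem_pbQ I v).mpr (h ((mem_pfQ I _).mpr ⟨v, hv, rfl⟩))

lemma I_le_pbQ (P : TwoSidedIdeal I.ringCon.Quotient) : I ≤ pbQ I P := by
  intro x hx
  rw [mem_pbQ, (pi_eq_zero_iff I x).mpr hx]
  exact P.zero_mem

lemma pfQ_prime {P : TwoSidedIdeal A} (hP : IsPrimeTwoSided P) (hIP : I ≤ P) :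
    IsPrimeTwoSided (pfQ I P) := by
  refine isPrime_of_pair (fun h1 => ?_) ?_
  · rw [mem_pfQ] at h1
    obtain ⟨x, hx, hx1⟩ := h1
    have : (RingCon.mk' I.ringCon) (x - 1) = 0 := by rw [map_sub, hx1, map_one, sub_self]
    have hx1I : x - 1 ∈ I := (pi_eq_zero_iff I _).mp this
    have : (1:A) ∈ P := by
      have := P.sub_mem hx (hIP hx1I)
      simpa using this
    exact not_one_mem hP this
  · intro U V hUV
    have hUV' : ∀ a ∈ pbQ I U, ∀ b ∈ pbQ I V, a * b ∈ P := by
      intro a ha b hb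
      rw [mem_pbQ] at ha hb
      have := hUV _ ha _ hb
      rw [← map_mul, mem_pfQ] at this
      obtain ⟨p, hp, hpab⟩ := this
      have : (RingCon.mk' I.ringCon) (a * b - p) = 0 := by rw [map_sub, hpab, sub_self]
      have hd : a * b - p ∈ I := (pi_eq_zero_iff I _).mp this
      have := P.add_mem (hIP hd) hp
      simpa using this
    rcases hP.2 _ _ hUV' with h | h
    · left; intro u hu
      obtain ⟨x, rfl⟩ := pi_surj I u
      exact (mem_pfQ I _).mpr ⟨x, h ((mem_pbQ I x).mpr hu), rfl⟩
    · right; intro v hv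
      obtain ⟨x, rfl⟩ := pi_surj I v
      exact (mem_pfQ I _).mpr ⟨x, h ((mem_pbQ I x).mpr hv), rfl⟩

lemma pbQ_pfQ {P : TwoSidedIdeal A} (hIP : I ≤ P) : pbQ I (pfQ I P) = P := by
  refine TwoSidedIdeal.ext fun x => ?_
  rw [mem_pbQ, mem_pfQ]
  constructor
  · rintro ⟨p, hp, hpx⟩
    have : (RingCon.mk' I.ringCon) (x - p) = 0 := by rw [map_sub, hpx, sub_self]
    have hd : x - p ∈ I := (pi_eq_zero_iff I _).mp this
    have := P.add_mem (hIP hd) hp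
    simpa using this
  · intro hx; exact ⟨x, hx, rfl⟩

/-- semiprime transfer: if I is semiprime, the quotient ring is semiprime -/
lemma quotient_semiprime (hI : primeRad (I : Set A) = (I : Set A)) :
    ∀ b ∈ primeRad (∅ : Set I.ringCon.Quotient), b = 0 := by
  intro b hb
  obtain ⟨x, rfl⟩ := pi_surj I b
  have hxI : x ∈ I := by
    rw [← SetLike.mem_coe, ← hI]
    intro P hP hIP
    have hprime := pfQ_prime I hP (TwoSidedIdeal.le_iff.mpr hIP)
    have := hb (pfQ I P) hprime (by simp)
    rw [mem_pfQ] at this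
    obtain ⟨p, hp, hpx⟩ := this
    have : (RingCon.mk' I.ringCon) (x - p) = 0 := by rw [map_sub, hpx, sub_self]
    have hd : x - p ∈ I := (pi_eq_zero_iff I _).mp this
    have := P.add_mem (TwoSidedIdeal.le_iff.mpr hIP (SetLike.mem_coe.mpr hd)) hp
    simpa using this
  exact (pi_eq_zero_iff I x).mpr hxI

/-- radical transfer: x in the prime radical of I maps into the prime radical of 0 -/
lemma rad_to_quotient {x : A} (hx : x ∈ primeRad (I : Set A)) :
    (RingCon.mk' I.ringCon) x ∈ primeRad (∅ : Set I.ringCon.Quotient) := by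
  intro P hP _
  have hprime := pbQ_prime I hP
  have hIle : (I : Set A) ⊆ (pbQ I P : Set A) := TwoSidedIdeal.le_iff.mp (I_le_pbQ I P)
  have := hx (pbQ I P) hprime hIle
  exact (mem_pbQ I x).mp this

end Quot
end St3
namespace St3
section Goldie
variable {B : Type*} [Ring B]

/-- left annihilator of a set -/
def annS (T : Set B) : Set B := {a | ∀ t ∈ T, a * t = 0}

variable (hsp : ∀ b ∈ primeRad (∅ : Set B), b = 0)

include hsp in
lemma sq_zero {w : B} (h : ∀ x, w * x * w = 0) : w = 0 := by
  apply hsp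
  intro P hP _
  rcases prime_pair hP (fun x => (h x) ▸ P.zero_mem) with h | h <;> exact h

include hsp in
lemma annS_to_right {J : TwoSidedIdeal B} {a : B} (ha : a ∈ annS (J : Set B)) :
    ∀ t ∈ J, t * a = 0 := by
  intro t ht
  refine sq_zero hsp (fun x => ?_)
  have h1 : a * (x * t) = 0 := ha _ (J.mul_mem_left x t ht)
  calc t * a * x * (t * a) = t * (a * (x * t)) * a := by simp [mul_assoc]
  _ = 0 := by rw [h1, mul_zero, zero_mul]

include hsp in
lemma right_to_annS {J : TwoSidedIdeal B} {a : B} (ha : ∀ t ∈ J, t * a = 0) :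
    a ∈ annS (J : Set B) := by
  intro t ht
  refine sq_zero hsp (fun x => ?_)
  have h1 : (t * x) * a = 0 := ha _ (J.mul_mem_right t x ht)
  calc a * t * x * (a * t) = a * ((t * x) * a) * t := by simp [mul_assoc]
  _ = 0 := by rw [h1, mul_zero, zero_mul]

/-- the (left) annihilator of a two-sided ideal, as a two-sided ideal -/
def annI (J : TwoSidedIdeal B) : TwoSidedIdeal B :=
  TwoSidedIdeal.mk' (annS (J : Set B))
    (fun t _ => zero_mul t)
    (fun {x y} hx hy t ht => by rw [add_mul, hx t ht, hy t ht, add_zero])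
    (fun {x} hx t ht => by rw [neg_mul, hx t ht, neg_zero])
    (fun {x y} hy t ht => by rw [mul_assoc, hy t ht, mul_zero])
    (fun {x y} hx t ht => by rw [mul_assoc, hx _ (J.mul_mem_left y t ht)])

@[simp] lemma mem_annI {J : TwoSidedIdeal B} {a : B} :
    a ∈ annI J ↔ a ∈ annS (J : Set B) := by
  rw [annI]; exact TwoSidedIdeal.mem_mk' ..

@[simp] lemma coe_annI {J : TwoSidedIdeal B} :
    ((annI J : TwoSidedIdeal B) : Set B) = annS (J : Set B) :=
  TwoSidedIdeal.coe_mk' _ _ _ _ _ _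

include hsp in
/-- maximal annihilators (within a family) are prime -/
lemma max_ann_prime {F : Set B} {J₀ : TwoSidedIdeal B} (hJ₀ : ∃ x ∈ J₀, x ≠ 0)
    (hF : F ⊆ annS (J₀ : Set B))
    (hmax : ∀ K : TwoSidedIdeal B, (∃ x ∈ K, x ≠ 0) → F ⊆ annS (K : Set B) →
      annS (J₀ : Set B) ⊆ annS (K : Set B) → annS (K : Set B) = annS (J₀ : Set B)) :
    IsPrimeTwoSided (annI J₀) := by
  refine isPrime_of_pair (fun h1 => ?_) ?_
  · rw [mem_annI] at h1
    obtain ⟨x, hx, hxne⟩ := hJ₀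
    exact hxne (by simpa using h1 x hx)
  intro U V hUV
  by_cases hV : V ≤ annI J₀
  · exact Or.inr hV
  left
  obtain ⟨v, hvV, hv⟩ : ∃ v ∈ V, v ∉ annI J₀ := by
    rw [TwoSidedIdeal.le_iff, Set.not_subset] at hV; exact hV
  rw [mem_annI] at hv
  obtain ⟨j₀, hj₀, hvj₀⟩ : ∃ j ∈ (J₀ : Set B), v * j ≠ 0 := by
    by_contra hc; push_neg at hc; exact hv hc
  set E : Set B := {x | ∃ v' ∈ V, ∃ j ∈ J₀, x = v' * j} with hE
  set K : TwoSidedIdeal B := TwoSidedIdeal.span E with hK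
  have hEK : E ⊆ (K : Set B) := fun x hx =>
    TwoSidedIdeal.mem_span_iff.mpr (fun I hI => hI hx)
  have hKne : ∃ x ∈ K, x ≠ 0 := ⟨v * j₀, hEK ⟨v, hvV, j₀, hj₀, rfl⟩, hvj₀⟩
  -- the auxiliary ideal W
  set W : TwoSidedIdeal B := TwoSidedIdeal.mk'
    {x | (∀ u ∈ U, u * x = 0) ∧ ∀ p ∈ annS (J₀ : Set B), x * p = 0}
    (⟨fun u _ => mul_zero u, fun p _ => zero_mul p⟩)
    (fun {x y} hx hy => ⟨fun u hu => by rw [mul_add, hx.1 u hu, hy.1 u hu, add_zero],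
      fun p hp => by rw [add_mul, hx.2 p hp, hy.2 p hp, add_zero]⟩)
    (fun {x} hx => ⟨fun u hu => by rw [mul_neg, hx.1 u hu, neg_zero],
      fun p hp => by rw [neg_mul, hx.2 p hp, neg_zero]⟩)
    (fun {x y} hy => ⟨fun u hu => by
        rw [show u * (x * y) = (u * x) * y by rw [mul_assoc], hy.1 _ (U.mul_mem_right u x hu)],
      fun p hp => by rw [mul_assoc, hy.2 p hp, mul_zero]⟩)
    (fun {x y} hx => ⟨fun u hu => by
        rw [show u * (x * y) = (u * x) * y by rw [mul_assoc], hx.1 u hu, zero_mul],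
      fun p hp => by
        have hyp : y * p ∈ annS (J₀ : Set B) := by
          have := (annI J₀).mul_mem_left y p ((mem_annI).mpr hp)
          rwa [mem_annI] at this
        rw [mul_assoc, hx.2 _ hyp]⟩)
    with hW
  have hEW : E ⊆ (W : Set B) := by
    rintro x ⟨v', hv', j, hj, rfl⟩
    show v' * j ∈ W
    rw [hW, TwoSidedIdeal.mem_mk']
    constructor
    · intro u hu
      have huv' : u * v' ∈ annI J₀ := hUV u hu v' hv'
      rw [mem_annI] at huv'
      rw [show u * (v' * j) = (u * v') * j by rw [mul_assoc]]
      exact huv' j hj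
    · intro p hp
      have hjp : j * p = 0 := annS_to_right hsp hp j hj
      rw [mul_assoc, hjp, mul_zero]
  have hKW : K ≤ W := by
    intro x hx
    exact TwoSidedIdeal.mem_span_iff.mp hx W hEW
  have hUK : (U : Set B) ⊆ annS (K : Set B) := by
    intro u hu x hx
    have := hKW hx
    rw [hW, TwoSidedIdeal.mem_mk'] at this
    exact this.1 u hu
  have hJK : annS (J₀ : Set B) ⊆ annS (K : Set B) := by
    intro p hp
    refine right_to_annS hsp (fun x hx => ?_)
    have := hKW hx
    rw [hW, TwoSidedIdeal.mem_mk'] at this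
    exact this.2 p hp
  have := hmax K hKne (Set.Subset.trans hF hJK) hJK
  intro u hu
  rw [mem_annI, ← this]
  exact hUK hu

/-- ACC on annihilators of two-sided ideals -/
def ACCann (B : Type*) [Ring B] : Prop :=
  ∀ c : ℕ → Set B, (∀ i, ∃ J : TwoSidedIdeal B, c i = annS (J : Set B)) →
    (∀ i, c i ⊆ c (i + 1)) → ∃ N, ∀ m, N ≤ m → c m = c N

/-- from ACC, nonempty families of annihilators (of nonzero ideals containing F) have
maximal elements -/
lemma exists_max_ann (hacc : ACCann B) (𝒮 : Set (Set B))
    (hform : ∀ s ∈ 𝒮, ∃ J : TwoSidedIdeal B, s = annS (J : Set B))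
    (hne : 𝒮.Nonempty) : ∃ m ∈ 𝒮, ∀ s ∈ 𝒮, m ⊆ s → s = m := by
  classical
  by_contra hcon
  push_neg at hcon
  have hstep : ∀ p : {s // s ∈ 𝒮}, ∃ q : {s // s ∈ 𝒮}, p.1 ⊆ q.1 ∧ q.1 ≠ p.1 := by
    rintro ⟨s, hs⟩
    obtain ⟨t, ht, hsub, hne'⟩ := hcon s hs
    exact ⟨⟨t, ht⟩, hsub, hne'⟩
  choose F hF1 hF2 using hstep
  obtain ⟨s₀, hs₀⟩ := hne
  set c : ℕ → {s // s ∈ 𝒮} := fun n => F^[n] ⟨s₀, hs₀⟩ with hc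
  have hcs : ∀ n, c (n + 1) = F (c n) := fun n => Function.iterate_succ_apply' F n _
  obtain ⟨N, hN⟩ := hacc (fun n => (c n).1)
    (fun i => hform _ (c i).2)
    (fun i => by show (c i).1 ⊆ (c (i+1)).1; rw [hcs]; exact hF1 (c i))
  have h1 : (c (N + 1)).1 = (c N).1 := hN (N + 1) (Nat.le_succ N)
  rw [hcs] at h1
  exact hF2 (c N) h1

end Goldie
end St3
namespace St3
section Goldie2
variable {B : Type*} [Ring B]

/-- helper: intersection of finitely many two-sided ideals -/
def iInterI {k : ℕ} (P : Fin k → TwoSidedIdeal B) : TwoSidedIdeal B :=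
  TwoSidedIdeal.mk' (⋂ i, (P i : Set B))
    (Set.mem_iInter.mpr fun i => (P i).zero_mem)
    (fun {x y} hx hy => Set.mem_iInter.mpr fun i =>
      (P i).add_mem (Set.mem_iInter.mp hx i) (Set.mem_iInter.mp hy i))
    (fun {x} hx => Set.mem_iInter.mpr fun i => (P i).neg_mem (Set.mem_iInter.mp hx i))
    (fun {x y} hy => Set.mem_iInter.mpr fun i => (P i).mul_mem_left x y (Set.mem_iInter.mp hy i))
    (fun {x y} hx => Set.mem_iInter.mpr fun i => (P i).mul_mem_right x y (Set.mem_iInter.mp hx i))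

lemma mem_iInterI {k : ℕ} {P : Fin k → TwoSidedIdeal B} {x : B} :
    x ∈ iInterI P ↔ ∀ i, x ∈ P i := by
  rw [iInterI, TwoSidedIdeal.mem_mk']
  exact Set.mem_iInter.trans (by simp)

/-- intersection of two two-sided ideals -/
def interI (P Q : TwoSidedIdeal B) : TwoSidedIdeal B :=
  TwoSidedIdeal.mk' ((P : Set B) ∩ (Q : Set B))
    (⟨P.zero_mem, Q.zero_mem⟩)
    (fun {x y} hx hy => ⟨P.add_mem hx.1 hy.1, Q.add_mem hx.2 hy.2⟩)
    (fun {x} hx => ⟨P.neg_mem hx.1, Q.neg_mem hx.2⟩)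
    (fun {x y} hy => ⟨P.mul_mem_left x y hy.1, Q.mul_mem_left x y hy.2⟩)
    (fun {x y} hx => ⟨P.mul_mem_right x y hx.1, Q.mul_mem_right x y hx.2⟩)

lemma mem_interI {P Q : TwoSidedIdeal B} {x : B} : x ∈ interI P Q ↔ x ∈ P ∧ x ∈ Q := by
  rw [interI]; exact TwoSidedIdeal.mem_mk' ..

/-- pairwise-annihilating families of nonzero ideals have bounded size -/
def AnnFamBound (B : Type*) [Ring B] (n : ℕ) : Prop :=
  ∀ (k : ℕ) (J : Fin k → TwoSidedIdeal B), (∀ i, ∃ x ∈ J i, x ≠ 0) →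
    (∀ i j, i ≠ j → ∀ a ∈ J i, ∀ b ∈ J j, a * b = 0) → k ≤ n

variable (hsp : ∀ b ∈ primeRad (∅ : Set B), b = 0)

include hsp in
theorem semiprime_finitely_many_primes {n : ℕ} (hbound : AnnFamBound B n) (hacc : ACCann B) :
    ∃ (t : ℕ) (P : Fin t → TwoSidedIdeal B), (∀ i, IsPrimeTwoSided (P i)) ∧
      (⋂ i, ((P i : TwoSidedIdeal B) : Set B)) = {0} := by
  classical
  by_cases hB : ∀ x : B, x = 0
  · refine ⟨0, Fin.elim0, fun i => i.elim0, ?_⟩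
    ext x
    simp [hB x]
  push_neg at hB
  have main : ∀ k : ℕ,
      (∃ (t : ℕ) (P : Fin t → TwoSidedIdeal B), (∀ i, IsPrimeTwoSided (P i)) ∧
        (⋂ i, ((P i : TwoSidedIdeal B) : Set B)) = {0}) ∨
      ∃ J : Fin k → TwoSidedIdeal B,
        (∀ i, ∃ x ∈ J i, x ≠ 0) ∧ (∀ i j, i ≠ j → ∀ a ∈ J i, ∀ b ∈ J j, a * b = 0) ∧
        (∀ i, IsPrimeTwoSided (annI (J i))) := by
    intro k
    induction k with
    | zero => exact Or.inr ⟨Fin.elim0, fun i => i.elim0, fun i => i.elim0, fun i => i.elim0⟩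
    | succ k ih =>
      rcases ih with hdone | ⟨J, hJnz, hJann, hJpr⟩
      · exact Or.inl hdone
      set NI : TwoSidedIdeal B := iInterI (fun i => annI (J i)) with hNI
      by_cases hN0 : (⋂ i, ((annI (J i) : TwoSidedIdeal B) : Set B)) = {0}
      · exact Or.inl ⟨k, fun i => annI (J i), hJpr, hN0⟩
      right
      have h0N : (0:B) ∈ ⋂ i, ((annI (J i) : TwoSidedIdeal B) : Set B) :=
        Set.mem_iInter.mpr fun i => (annI (J i)).zero_mem
      have hnsub : ¬ ((⋂ i, ((annI (J i) : TwoSidedIdeal B) : Set B)) ⊆ {0}) := by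
        intro hsub
        exact hN0 (Set.Subset.antisymm hsub (by
          intro y hy
          rw [Set.mem_singleton_iff] at hy
          rw [hy]; exact h0N))
      obtain ⟨w, hwN, hw0⟩ := Set.not_subset.mp hnsub
      rw [Set.mem_singleton_iff] at hw0
      have hwNI : w ∈ NI := mem_iInterI.mpr (Set.mem_iInter.mp hwN)
      -- find a maximal annihilator containing ann(NI)
      set 𝒮 : Set (Set B) := {s | ∃ K : TwoSidedIdeal B, s = annS (K : Set B) ∧
        (∃ x ∈ K, x ≠ 0) ∧ annS ((NI : TwoSidedIdeal B) : Set B) ⊆ s} with h𝒮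
      have hform : ∀ s ∈ 𝒮, ∃ K : TwoSidedIdeal B, s = annS (K : Set B) := by
        rintro s ⟨K, hK, -, -⟩; exact ⟨K, hK⟩
      have hne𝒮 : 𝒮.Nonempty := ⟨annS ((NI : TwoSidedIdeal B) : Set B),
        ⟨NI, rfl, ⟨w, hwNI, hw0⟩, subset_rfl⟩⟩
      obtain ⟨m, hm𝒮, hmmax⟩ := exists_max_ann hacc 𝒮 hform hne𝒮
      obtain ⟨J₀, rfl, hJ₀nz, hmsub⟩ := hm𝒮
      -- refine to J₁ := J₀ ∩ NI
      set J₁ : TwoSidedIdeal B := interI J₀ NI with hJ₁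
      have hJ₁J₀ : ∀ x ∈ J₁, x ∈ J₀ := fun x hx => (mem_interI.mp hx).1
      have hJ₁NI : ∀ x ∈ J₁, x ∈ NI := fun x hx => (mem_interI.mp hx).2
      have hJ₁nz : ∃ x ∈ J₁, x ≠ 0 := by
        by_contra hz
        push_neg at hz
        have hJ₀sub : (J₀ : Set B) ⊆ annS ((NI : TwoSidedIdeal B) : Set B) := by
          intro j hj t ht
          exact hz (j * t) (mem_interI.mpr
            ⟨J₀.mul_mem_right j t hj, NI.mul_mem_left j t ht⟩)
        have hJ₀ann : (J₀ : Set B) ⊆ annS ((J₀ : TwoSidedIdeal B) : Set B) :=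
          hJ₀sub.trans hmsub
        obtain ⟨j, hj, hjne⟩ := hJ₀nz
        refine hjne (sq_zero hsp fun x => ?_)
        exact hJ₀ann (J₀.mul_mem_right j x hj) j hj
      have hannmono : annS ((J₀ : TwoSidedIdeal B) : Set B) ⊆ annS ((J₁ : TwoSidedIdeal B) : Set B) :=
        fun a ha t ht => ha t (hJ₁J₀ t ht)
      have hannJ₁ : annS ((J₁ : TwoSidedIdeal B) : Set B) = annS ((J₀ : TwoSidedIdeal B) : Set B) := by
        refine hmmax _ ⟨J₁, rfl, hJ₁nz, hmsub.trans hannmono⟩ hannmono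
      have hprime₁ : IsPrimeTwoSided (annI J₁) := by
        refine max_ann_prime hsp hJ₁nz (hmsub.trans hannmono) ?_
        intro K hKnz hFK hJ₁K
        have hmK : annS ((J₀ : TwoSidedIdeal B) : Set B) ⊆ annS ((K : TwoSidedIdeal B) : Set B) := by
          rw [← hannJ₁]; exact hJ₁K
        have := hmmax _ ⟨K, rfl, hKnz, hFK⟩ hmK
        rw [this, hannJ₁]
      refine ⟨Fin.snoc J J₁, ?_, ?_, ?_⟩
      · intro i
        refine Fin.lastCases ?_ (fun j => ?_) i
        · rw [Fin.snoc_last]; exact hJ₁nz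
        · rw [Fin.snoc_castSucc]; exact hJnz j
      · have hJ₁annJ : ∀ (j' : Fin k), ∀ x ∈ J₁, x ∈ annS ((J j' : TwoSidedIdeal B) : Set B) := by
          intro j' x hx
          have := mem_iInterI.mp (hJ₁NI x hx) j'
          rwa [mem_annI] at this
        intro i j hij a ha b hb
        rcases Fin.eq_castSucc_or_eq_last i with ⟨i', rfl⟩ | rfl <;>
          rcases Fin.eq_castSucc_or_eq_last j with ⟨j', rfl⟩ | rfl
        · rw [Fin.snoc_castSucc] at ha hb
          exact hJann i' j' (fun h => hij (by rw [h])) a ha b hb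
        · rw [Fin.snoc_castSucc] at ha
          rw [Fin.snoc_last] at hb
          exact annS_to_right hsp (J := J i') (hJ₁annJ i' b hb) a ha
        · rw [Fin.snoc_last] at ha
          rw [Fin.snoc_castSucc] at hb
          exact hJ₁annJ j' a ha b hb
        · exact absurd rfl hij
      · intro i
        refine Fin.lastCases ?_ (fun j => ?_) i
        · rw [Fin.snoc_last]; exact hprime₁
        · rw [Fin.snoc_castSucc]; exact hJpr j
  rcases main (n+1) with hdone | ⟨J, h1, h2, _⟩
  · exact hdone
  · exact absurd (hbound (n+1) J h1 h2) (by omega)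

end Goldie2
end St3
namespace St3
section Goldie3
variable {B : Type*} [Ring B]
variable (hsp : ∀ b ∈ primeRad (∅ : Set B), b = 0)

include hsp in
lemma bound_of_goldie (hG : LeftOrRightGoldie B) : ∃ n, AnnFamBound B n := by
  rcases hG with ⟨⟨n, hdim⟩, -⟩ | ⟨⟨n, hdim⟩, -⟩
  · refine ⟨n, fun k J hnz hann => ?_⟩
    set g : Fin k → Submodule B B := fun i =>
      { carrier := ((J i : TwoSidedIdeal B) : Set B)
        add_mem' := fun ha hb => (J i).add_mem ha hb
        zero_mem' := (J i).zero_mem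
        smul_mem' := fun c x hx => by
          rw [smul_eq_mul]; exact (J i).mul_mem_left c x hx } with hg
    have hgmem : ∀ i x, x ∈ g i ↔ x ∈ J i := fun i x => Iff.rfl
    have hne : ∀ i, g i ≠ ⊥ := by
      intro i h
      obtain ⟨x, hx, hx0⟩ := hnz i
      have : x ∈ g i := (hgmem i x).mpr hx
      rw [h] at this
      exact hx0 (Submodule.mem_bot _ |>.mp this)
    have hfam : FamIndep g := by
      intro i
      rw [eq_bot_iff]
      intro x hx
      obtain ⟨hx1, hx2⟩ := Submodule.mem_inf.mp hx
      set D : Submodule B B :=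
        { carrier := {x | ∀ y ∈ J i, x * y = 0}
          add_mem' := fun ha hb y hy => by rw [add_mul, ha y hy, hb y hy, add_zero]
          zero_mem' := fun y _ => zero_mul y
          smul_mem' := fun c x hx y hy => by
            rw [smul_eq_mul, mul_assoc, hx y hy, mul_zero] } with hD
      have hsup : (⨆ j ∈ ({i}ᶜ : Set (Fin k)), g j) ≤ D := by
        refine iSup_le fun j => iSup_le fun hj => ?_
        intro b hb y hy
        exact hann j i (by simpa using hj) b ((hgmem j b).mp hb) y hy
      have hxD : ∀ y ∈ J i, x * y = 0 := hsup hx2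
      have hx0 : x = 0 := by
        refine sq_zero hsp fun t => ?_
        rw [mul_assoc]
        exact hxD _ ((J i).mul_mem_left t x ((hgmem i x).mp hx1))
      simp [hx0]
    exact hdim k g hne hfam
  · refine ⟨n, fun k J hnz hann => ?_⟩
    set g : Fin k → Submodule Bᵐᵒᵖ Bᵐᵒᵖ := fun i =>
      { carrier := {x : Bᵐᵒᵖ | x.unop ∈ J i}
        add_mem' := fun {a b} ha hb => by
          show (a + b).unop ∈ J i
          rw [MulOpposite.unop_add]; exact (J i).add_mem ha hb
        zero_mem' := by show (0 : Bᵐᵒᵖ).unop ∈ J i; simpa using (J i).zero_mem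
        smul_mem' := fun c x hx => by
          show (c • x).unop ∈ J i
          rw [smul_eq_mul, MulOpposite.unop_mul]
          exact (J i).mul_mem_right _ _ hx } with hg
    have hgmem : ∀ i (x : Bᵐᵒᵖ), x ∈ g i ↔ x.unop ∈ J i := fun i x => Iff.rfl
    have hne : ∀ i, g i ≠ ⊥ := by
      intro i h
      obtain ⟨x, hx, hx0⟩ := hnz i
      have : MulOpposite.op x ∈ g i := (hgmem i _).mpr (by simpa using hx)
      rw [h] at this
      exact hx0 (by simpa using Submodule.mem_bot _ |>.mp this)
    have hfam : FamIndep g := by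
      intro i
      rw [eq_bot_iff]
      intro x hx
      obtain ⟨hx1, hx2⟩ := Submodule.mem_inf.mp hx
      set D : Submodule Bᵐᵒᵖ Bᵐᵒᵖ :=
        { carrier := {x : Bᵐᵒᵖ | ∀ y ∈ J i, y * x.unop = 0}
          add_mem' := fun {a b} ha hb y hy => by
            rw [MulOpposite.unop_add, mul_add, ha y hy, hb y hy, add_zero]
          zero_mem' := fun y _ => by simp
          smul_mem' := fun c x hx y hy => by
            rw [smul_eq_mul, MulOpposite.unop_mul, ← mul_assoc, hx y hy, zero_mul] } with hD
      have hsup : (⨆ j ∈ ({i}ᶜ : Set (Fin k)), g j) ≤ D := by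
        refine iSup_le fun j => iSup_le fun hj => ?_
        intro b hb y hy
        exact hann i j (by simpa using (Ne.symm (by simpa using hj))) y hy b.unop ((hgmem j b).mp hb)
      have hxD : ∀ y ∈ J i, y * x.unop = 0 := hsup hx2
      have hx0 : x.unop = 0 := by
        refine sq_zero hsp fun t => ?_
        exact hxD _ ((J i).mul_mem_right _ t ((hgmem i x).mp hx1))
      have : x = 0 := by
        rw [← MulOpposite.op_unop x, hx0]; simp
      simp [this]
    exact hdim k g hne hfam

include hsp in
lemma acc_of_goldie (hG : LeftOrRightGoldie B) : ACCann B := by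
  rcases hG with ⟨-, hacc⟩ | ⟨-, hacc⟩
  · intro c hform hasc
    exact hacc c (fun i => by
      obtain ⟨J, hJ⟩ := hform i
      exact ⟨((J : TwoSidedIdeal B) : Set B), hJ⟩) hasc
  · intro c hform hasc
    choose J hJ using hform
    set d : ℕ → Set Bᵐᵒᵖ := fun i => MulOpposite.unop ⁻¹' (c i) with hd
    have hdform : ∀ i, ∃ T : Set Bᵐᵒᵖ, d i = {a | ∀ t ∈ T, a * t = 0} := by
      intro i
      refine ⟨MulOpposite.op '' ((J i : TwoSidedIdeal B) : Set B), ?_⟩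
      ext a
      simp only [hd, Set.mem_preimage, Set.mem_setOf_eq]
      rw [hJ i]
      constructor
      · rintro ha t ⟨t', ht', rfl⟩
        have : t' * a.unop = 0 := annS_to_right hsp (J := J i) ha t' ht'
        calc a * MulOpposite.op t' = MulOpposite.op (t' * a.unop) := by
              rw [← MulOpposite.op_unop a, ← MulOpposite.op_mul]; simp
        _ = 0 := by rw [this]; simp
      · intro ha
        refine right_to_annS hsp (J := J i) fun t ht => ?_
        have := ha (MulOpposite.op t) ⟨t, ht, rfl⟩
        have h2 : MulOpposite.op (t * a.unop) = 0 := by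
          rw [← this, ← MulOpposite.op_unop a, ← MulOpposite.op_mul]; simp
        exact (MulOpposite.op_eq_zero_iff _).mp h2
    obtain ⟨N, hN⟩ := hacc d hdform (fun i x hx => hasc i hx)
    refine ⟨N, fun m hm => ?_⟩
    have := hN m hm
    ext x
    constructor
    · intro hx
      have : MulOpposite.op x ∈ d m := by simpa [hd] using hx
      rw [hN m hm] at this
      simpa [hd] using this
    · intro hx
      have : MulOpposite.op x ∈ d N := by simpa [hd] using hx
      rw [← hN m hm] at this
      simpa [hd] using this

end Goldie3

/-- Main finiteness theorem: over a semiprime ideal with Goldie quotient there are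
finitely many primes with intersection the ideal itself. -/
theorem finitely_many_primes {A : Type*} [Ring A] (I : TwoSidedIdeal A)
    (hI : primeRad (I : Set A) = (I : Set A))
    (hG : LeftOrRightGoldie I.ringCon.Quotient) :
    ∃ (t : ℕ) (P : Fin t → TwoSidedIdeal A),
      (∀ i, IsPrimeTwoSided (P i) ∧ I ≤ P i) ∧ (⋂ i, ((P i : TwoSidedIdeal A) : Set A)) = (I : Set A) := by
  have hsp := quotient_semiprime I hI
  obtain ⟨n, hbound⟩ := bound_of_goldie hsp hG
  have hacc := acc_of_goldie hsp hG
  obtain ⟨t, Pb, hPb, hPb0⟩ := semiprime_finitely_many_primes hsp hbound hacc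
  refine ⟨t, fun i => pbQ I (Pb i), fun i => ⟨pbQ_prime I (hPb i), I_le_pbQ I _⟩, ?_⟩
  ext x
  simp only [Set.mem_iInter, SetLike.mem_coe, mem_pbQ]
  constructor
  · intro h
    have hmem : (RingCon.mk' I.ringCon) x ∈ ⋂ i, ((Pb i : TwoSidedIdeal _) : Set _) :=
      Set.mem_iInter.mpr (fun i => h i)
    rw [hPb0, Set.mem_singleton_iff] at hmem
    exact (pi_eq_zero_iff I x).mp hmem
  · intro hx i
    have h0 : (RingCon.mk' I.ringCon) x = 0 := (pi_eq_zero_iff I x).mpr hx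
    rw [h0]
    exact (Pb i).zero_mem

end St3
namespace St3
section Ext
variable {R S : Type*} [Ring R] [Ring S] (f : R →+* S)

lemma extSet_mono {X Y : Set R} (h : X ⊆ Y) : extSet f X ⊆ extSet f Y := by
  intro a ha s
  exact Ideal.span_mono (Set.image_mono h) (ha s)

/-- `extSet` as a two-sided ideal -/
def extIdeal (X : Set R) : TwoSidedIdeal S :=
  TwoSidedIdeal.mk' (extSet f X)
    (fun s => by rw [zero_mul]; exact Submodule.zero_mem _)
    (fun {x y} hx hy s => by rw [add_mul]; exact Submodule.add_mem _ (hx s) (hy s))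
    (fun {x} hx s => by rw [neg_mul]; exact Submodule.neg_mem _ (hx s))
    (fun {x y} hy s => by
      rw [mul_assoc]
      have := Submodule.smul_mem (Ideal.span (f '' X)) x (hy s)
      rwa [smul_eq_mul] at this)
    (fun {x y} hx s => by rw [mul_assoc]; exact hx (y * s))

@[simp] lemma mem_extIdeal {X : Set R} {a : S} : a ∈ extIdeal f X ↔ a ∈ extSet f X := by
  rw [extIdeal]; exact TwoSidedIdeal.mem_mk' ..

lemma extSet_subset_span {X : Set R} {a : S} (ha : a ∈ extSet f X) :
    a ∈ Ideal.span (f '' X) := by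
  have := ha 1
  rwa [mul_one] at this

lemma span_mul_f {X Y Z : Set R} (hZ : ∀ x ∈ X, ∀ y ∈ Y, x * y ∈ Z) {u : S}
    (hu : u ∈ Ideal.span (f '' X)) {y : R} (hy : y ∈ Y) :
    u * f y ∈ Ideal.span (f '' Z) := by
  induction hu using Submodule.span_induction with
  | mem x hx =>
    obtain ⟨x', hx', rfl⟩ := hx
    rw [← map_mul]
    exact Ideal.subset_span ⟨x' * y, hZ x' hx' y hy, rfl⟩
  | zero => rw [zero_mul]; exact Submodule.zero_mem _
  | add u v _ _ hu hv => rw [add_mul]; exact Submodule.add_mem _ hu hv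
  | smul c u _ hu =>
    rw [smul_eq_mul, mul_assoc]
    have := Submodule.smul_mem (Ideal.span (f '' Z)) c hu
    rwa [smul_eq_mul] at this

lemma extSet_mul {X Y Z : Set R} (hZ : ∀ x ∈ X, ∀ y ∈ Y, x * y ∈ Z) {a b : S}
    (ha : a ∈ extSet f X) (hb : b ∈ extSet f Y) : a * b ∈ extSet f Z := by
  intro s
  rw [mul_assoc]
  have hbs : b * s ∈ Ideal.span (f '' Y) := hb s
  have claim : ∀ (w : S), w ∈ Ideal.span (f '' Y) →
      ∀ a', a' ∈ extSet f X → a' * w ∈ Ideal.span (f '' Z) := by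
    intro w hw
    induction hw using Submodule.span_induction with
    | mem x hx =>
      intro a' ha'
      obtain ⟨y', hy', rfl⟩ := hx
      exact span_mul_f f hZ (extSet_subset_span f ha') hy'
    | zero => intro a' _; rw [mul_zero]; exact Submodule.zero_mem _
    | add u v _ _ hu hv => intro a' ha'; rw [mul_add]; exact Submodule.add_mem _ (hu a' ha') (hv a' ha')
    | smul c u _ hu =>
      intro a' ha'
      rw [smul_eq_mul, ← mul_assoc]
      refine hu (a' * c) (fun s' => ?_)
      rw [mul_assoc]
      exact ha' (c * s')
  exact claim _ hbs a ha

/-- products over a family, each factor in `extSet f (X i)`, land in the `extSet` of the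
set of corresponding products -/
lemma ext_prod_fam : ∀ {t : ℕ} (X : Fin t → Set R) (g : Fin t → S),
    (∀ i, g i ∈ extSet f (X i)) →
    (List.ofFn g).prod ∈
      extSet f {z | ∃ c : Fin t → R, (∀ i, c i ∈ X i) ∧ (List.ofFn c).prod = z} := by
  intro t
  induction t with
  | zero =>
    intro X g _
    have h1 : (1:R) ∈ {z | ∃ c : Fin 0 → R, (∀ i, c i ∈ X i) ∧ (List.ofFn c).prod = z} :=
      ⟨Fin.elim0, fun i => i.elim0, by simp⟩
    simp only [List.ofFn_zero, List.prod_nil]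
    intro s
    rw [one_mul]
    have : f 1 ∈ f '' _ := ⟨1, h1, rfl⟩
    have hs := Submodule.smul_mem (Ideal.span (f '' _)) s (Ideal.subset_span this)
    rwa [smul_eq_mul, map_one, mul_one] at hs
  | succ t ih =>
    intro X g hg
    rw [List.ofFn_succ, List.prod_cons]
    refine extSet_mul f ?_ (hg 0) (ih (fun i => X i.succ) (fun i => g i.succ) (fun i => hg i.succ))
    rintro x hx y ⟨c, hc, rfl⟩
    refine ⟨Fin.cons x c, ?_, ?_⟩
    · intro i
      refine Fin.cases ?_ (fun j => ?_) i
      · simpa using hx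
      · simpa using hc j
    · rw [List.ofFn_succ, List.prod_cons]
      simp

/-- nilpotency bridging: if `extSet f I ⊆ P` then `extSet f √I ⊆ P` -/
lemma extSet_rad_subset {I : TwoSidedIdeal R} (hnil : NilpotentPrimeRad I.ringCon.Quotient)
    {P : TwoSidedIdeal S} (hP : IsPrimeTwoSided P)
    (hIP : extSet f (I : Set R) ⊆ (P : Set S)) :
    extSet f (primeRad (I : Set R)) ⊆ (P : Set S) := by
  obtain ⟨n, hn0, hnilp⟩ := hnil
  have hprodI : ∀ c : Fin n → R, (∀ i, c i ∈ primeRad (I : Set R)) →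
      (List.ofFn c).prod ∈ (I : Set R) := by
    intro c hc
    have hlen : (List.ofFn fun i => (RingCon.mk' I.ringCon) (c i)).length = n := by simp
    have hmem : ∀ x ∈ (List.ofFn fun i => (RingCon.mk' I.ringCon) (c i)),
        x ∈ primeRad (∅ : Set I.ringCon.Quotient) := by
      intro x hx
      rw [List.mem_ofFn] at hx
      obtain ⟨i, rfl⟩ := hx
      exact rad_to_quotient I (hc i)
    have h0 := hnilp _ hlen hmem
    have hprod : (RingCon.mk' I.ringCon) (List.ofFn c).prod = 0 := by
      rw [map_list_prod, List.map_ofFn]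
      exact h0
    exact (pi_eq_zero_iff I _).mp hprod
  have key : ∀ g : Fin n → S, (∀ i, g i ∈ extIdeal f (primeRad (I : Set R))) →
      (List.ofFn g).prod ∈ P := by
    intro g hg
    have hpf := ext_prod_fam f (fun _ => primeRad (I : Set R)) g
      (fun i => (mem_extIdeal f).mp (hg i))
    have hZI : {z | ∃ c : Fin n → R, (∀ i, c i ∈ primeRad (I : Set R)) ∧
        (List.ofFn c).prod = z} ⊆ (I : Set R) := by
      rintro z ⟨c, hc, rfl⟩
      exact hprodI c hc
    exact hIP (extSet_mono f hZI hpf)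
  obtain ⟨i, hi⟩ := prime_of_prod hP (fun _ : Fin n => extIdeal f (primeRad (I : Set R))) key
  intro a ha
  exact hi ((mem_extIdeal f).mpr ha)

/-- the preimage of a two-sided ideal under f, as a two-sided ideal -/
def pbF (P : TwoSidedIdeal S) : TwoSidedIdeal R :=
  TwoSidedIdeal.mk' (f ⁻¹' (P : Set S))
    (by simp only [Set.mem_preimage, map_zero]; exact P.zero_mem)
    (fun {x y} hx hy => by
      simp only [Set.mem_preimage, map_add] at *; exact P.add_mem hx hy)
    (fun {x} hx => by simp only [Set.mem_preimage, map_neg] at *; exact P.neg_mem hx)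
    (fun {x y} hy => by
      simp only [Set.mem_preimage, map_mul] at *; exact P.mul_mem_left _ _ hy)
    (fun {x y} hx => by
      simp only [Set.mem_preimage, map_mul] at *; exact P.mul_mem_right _ _ hx)

@[simp] lemma mem_pbF {P : TwoSidedIdeal S} {x : R} : x ∈ pbF f P ↔ f x ∈ P := by
  rw [pbF, TwoSidedIdeal.mem_mk']; rfl

lemma one_not_mem_pbF {P : TwoSidedIdeal S} (hP : IsPrimeTwoSided P) : (1:R) ∉ pbF f P := by
  rw [mem_pbF, map_one]
  exact not_one_mem hP

end Ext
end St3
namespace St3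
section Main
variable {R S : Type*} [Ring R] [Ring S] (f : R →+* S)

/-- the key pointwise consequence of adjointness -/
def STAR (f : R →+* S) : Prop :=
  ∀ P : TwoSidedIdeal S, IsPrimeTwoSided P → ∀ I : TwoSidedIdeal R,
    primeRad (I : Set R) = (I : Set R) →
    (extSet f (I : Set R) ⊆ (P : Set S) ↔ (I : Set R) ⊆ primeRad (f ⁻¹' (P : Set S)))

lemma zar1 {X : Set R} {Y : Set R} :
    zarV X ⊆ zarV Y ↔ Y ⊆ primeRad X := by
  constructor
  · intro h y hy Q hQ hsub
    exact (h ⟨hQ, hsub⟩).2 hy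
  · intro h Q hQ
    exact ⟨hQ.1, fun y hy => h hy Q hQ.1 hQ.2⟩

lemma zar2 {P : TwoSidedIdeal S} (hP : IsPrimeTwoSided P) {Y : Set S} :
    zarV (P : Set S) ⊆ zarV Y ↔ Y ⊆ (P : Set S) := by
  constructor
  · intro h
    exact (h ⟨hP, subset_rfl⟩).2
  · intro h Q hQ
    exact ⟨hQ.1, h.trans hQ.2⟩

lemma rad_mono_iff {X W : Set R} : X ⊆ primeRad W ↔ primeRad X ⊆ primeRad W := by
  constructor
  · intro h x hx Q hQ hWQ
    exact hx Q hQ (h.trans (primeRad_subset hQ hWQ))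
  · intro h
    exact (subset_primeRad X).trans h

lemma star_of_adjoint (hadj : LambdaLeftAdjointRho f) : STAR f := by
  intro P hP I hI
  have h := hadj P (prime_semiprime hP) I hI
  rw [zar1, zar2 hP] at h
  exact h.symm

lemma rcorr_sub_iff {P : TwoSidedIdeal S} (Y : Set R) :
    rCorr f P ⊆ zarV Y ↔ Y ⊆ primeRad (f ⁻¹' (P : Set S)) := by
  constructor
  · intro h y hy Q hQ hsub
    obtain ⟨Q₀, hQ₀min, hQ₀le⟩ := exists_minimalOver hQ hsub
    exact hQ₀le ((h hQ₀min).2 hy)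
  · intro h Q hQmin
    exact ⟨hQmin.1, fun y hy => h hy Q hQmin.1 hQmin.2.1⟩

lemma pc_of_star (star : STAR f) (hRN : FactorRadsNilpotent R) :
    ∀ P : TwoSidedIdeal S, IsPrimeTwoSided P → ∀ I : TwoSidedIdeal R,
      (rCorr f P ⊆ zarV (I : Set R) ↔ extSet f (I : Set R) ⊆ (P : Set S)) := by
  intro P hP I
  have h2 := star P hP (radIdeal (I : Set R)) (radIdeal_semiprime _)
  rw [coe_radIdeal] at h2
  have h3 : extSet f (I : Set R) ⊆ (P : Set S) ↔
      extSet f (primeRad (I : Set R)) ⊆ (P : Set S) := by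
    constructor
    · intro h
      exact extSet_rad_subset f (hRN I) hP h
    · intro h
      exact (extSet_mono f (subset_primeRad _)).trans h
  rw [rcorr_sub_iff, h3, h2, rad_mono_iff]

end Main
end St3
namespace St3
section Final
variable {R S : Type*} [Ring R] [Ring S] (f : R →+* S)

lemma exists_minimal_over_pre {P : TwoSidedIdeal S} (hP : IsPrimeTwoSided P) :
    ∃ Q, minimalOver (f ⁻¹' (P : Set S)) Q := by
  obtain ⟨Q', hQ', hle⟩ := exists_prime_above (pbF f P) (one_not_mem_pbF f hP)
  have hsub : f ⁻¹' (P : Set S) ⊆ (Q' : Set R) := fun x hx => hle ((mem_pbF f).mpr hx)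
  obtain ⟨Q₀, hQ₀, _⟩ := exists_minimalOver hQ' hsub
  exact ⟨Q₀, hQ₀⟩

lemma unique_minimal (star : STAR f) (hRG : SemiprimeFactorsGoldie R)
    {P : TwoSidedIdeal S} (hP : IsPrimeTwoSided P) {Q₁ Q₂ : TwoSidedIdeal R}
    (h1 : minimalOver (f ⁻¹' (P : Set S)) Q₁) (h2 : minimalOver (f ⁻¹' (P : Set S)) Q₂) :
    Q₁ = Q₂ := by
  by_contra hne
  set X := f ⁻¹' (P : Set S) with hX
  set I₀ := radIdeal X with hI₀
  have hI₀sp := radIdeal_semiprime X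
  obtain ⟨t, Rf, hRf, hRint⟩ := finitely_many_primes I₀ hI₀sp (hRG I₀ hI₀sp)
  rw [coe_radIdeal] at hRint
  have hXRf : ∀ i, X ⊆ ((Rf i : TwoSidedIdeal R) : Set R) := by
    intro i
    exact (subset_primeRad X).trans
      (by rw [← coe_radIdeal X]; exact TwoSidedIdeal.le_iff.mp (hRf i).2)
  have hnot : ∀ i, ¬ (((Rf i : TwoSidedIdeal R) : Set R) ⊆ primeRad X) := by
    intro i hsub
    have heq : ((Rf i : TwoSidedIdeal R) : Set R) = primeRad X :=
      Set.Subset.antisymm hsub (by rw [← hRint]; exact Set.iInter_subset _ i)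
    have hI₀eq : I₀ = Rf i := SetLike.ext' (by rw [coe_radIdeal]; exact heq.symm)
    have hI₀prime : IsPrimeTwoSided I₀ := hI₀eq ▸ (hRf i).1
    have e1 : I₀ = Q₁ := h1.2.2 I₀ hI₀prime
      (by rw [coe_radIdeal]; exact subset_primeRad X)
      (TwoSidedIdeal.le_iff.mpr (by rw [coe_radIdeal]; exact primeRad_subset h1.1 h1.2.1))
    have e2 : I₀ = Q₂ := h2.2.2 I₀ hI₀prime
      (by rw [coe_radIdeal]; exact subset_primeRad X)
      (TwoSidedIdeal.le_iff.mpr (by rw [coe_radIdeal]; exact primeRad_subset h2.1 h2.2.1))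
    exact hne (e1.symm.trans e2)
  have ha : ∀ i, ∃ a ∈ extSet f ((Rf i : TwoSidedIdeal R) : Set R), a ∉ P := by
    intro i
    have hs := star P hP (Rf i) (prime_semiprime (hRf i).1)
    have hns : ¬ extSet f ((Rf i : TwoSidedIdeal R) : Set R) ⊆ (P : Set S) :=
      fun hsub => hnot i (hs.mp hsub)
    exact Set.not_subset.mp hns
  have hTP : ∀ g : Fin t → S, (∀ i, g i ∈ extIdeal f ((Rf i : TwoSidedIdeal R) : Set R)) →
      (List.ofFn g).prod ∈ P := by
    intro g hg
    have hpf := ext_prod_fam f (fun i => ((Rf i : TwoSidedIdeal R) : Set R)) g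
      (fun i => (mem_extIdeal f).mp (hg i))
    have hZ : {z | ∃ c : Fin t → R, (∀ i, c i ∈ ((Rf i : TwoSidedIdeal R) : Set R)) ∧
        (List.ofFn c).prod = z} ⊆ primeRad X := by
      rintro z ⟨c, hc, rfl⟩
      rw [← hRint]
      refine Set.mem_iInter.mpr fun i => ?_
      exact list_prod_mem _ ⟨c i, List.mem_ofFn.mpr ⟨i, rfl⟩, hc i⟩
    have hsub : extSet f (primeRad X) ⊆ (P : Set S) := by
      have hstar := star P hP I₀ hI₀sp
      rw [coe_radIdeal] at hstar
      exact hstar.mpr subset_rfl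
    exact hsub (extSet_mono f hZ hpf)
  obtain ⟨i, hi⟩ := prime_of_prod hP (fun i => extIdeal f ((Rf i : TwoSidedIdeal R) : Set R)) hTP
  obtain ⟨a, haext, haP⟩ := ha i
  exact haP (hi ((mem_extIdeal f).mpr haext))

end Final
end St3

/-- Assume every semiprime factor ring of `R` and of `S` is left or
right Goldie and the prime radical of every factor ring of `R` and of `S` is nilpotent.
Then `λ` is a left adjoint to `ρ` if and only if (a) the correspondence `r` is a
single-valued continuous function, and (b) `r^{[-1]}(V_R(I)) = V_S(I^S)` for every
ideal `I` of `R`. -/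
theorem statement_3 {R S : Type*} [Ring R] [Ring S] (f : R →+* S)
    (hRG : SemiprimeFactorsGoldie R) (hSG : SemiprimeFactorsGoldie S)
    (hRN : FactorRadsNilpotent R) (hSN : FactorRadsNilpotent S) :
    LambdaLeftAdjointRho f ↔
      ((∀ P : TwoSidedIdeal S, IsPrimeTwoSided P →
          ∃! Q : TwoSidedIdeal R, minimalOver (f ⁻¹' (P : Set S)) Q) ∧
       (∀ X : Set R, ∃ Y : Set S,
          {P | IsPrimeTwoSided P ∧ rCorr f P ⊆ zarV X} = zarV Y) ∧
       (∀ I : TwoSidedIdeal R,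
          {P | IsPrimeTwoSided P ∧ rCorr f P ⊆ zarV (I : Set R)} =
            zarV (extSet f (I : Set R)))) := by
  constructor
  · intro hadj
    have star := St3.star_of_adjoint f hadj
    refine ⟨?_, ?_, ?_⟩
    · intro P hP
      obtain ⟨Q₀, hQ₀⟩ := St3.exists_minimal_over_pre f hP
      exact ⟨Q₀, hQ₀, fun Q hQ => St3.unique_minimal f star hRG hP hQ hQ₀⟩
    · intro X
      refine ⟨extSet f (primeRad X), ?_⟩
      ext P
      simp only [Set.mem_setOf_eq]
      constructor
      · rintro ⟨hP, hsub⟩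
        refine ⟨hP, ?_⟩
        have hr := (St3.rcorr_sub_iff f (P := P) X).mp hsub
        have hr2 : rCorr f P ⊆ zarV ((St3.radIdeal X : TwoSidedIdeal R) : Set R) := by
          rw [St3.rcorr_sub_iff, St3.coe_radIdeal, ← St3.rad_mono_iff]
          exact hr
        have hfin := (St3.pc_of_star f star hRN P hP (St3.radIdeal X)).mp hr2
        rwa [St3.coe_radIdeal] at hfin
      · rintro ⟨hP, hsub⟩
        refine ⟨hP, ?_⟩
        have h1 : extSet f ((St3.radIdeal X : TwoSidedIdeal R) : Set R) ⊆ (P : Set S) := by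
          rwa [St3.coe_radIdeal]
        have hfin := (St3.pc_of_star f star hRN P hP (St3.radIdeal X)).mpr h1
        rw [St3.rcorr_sub_iff, St3.coe_radIdeal, ← St3.rad_mono_iff] at hfin
        rw [St3.rcorr_sub_iff]
        exact hfin
    · intro I
      ext P
      simp only [Set.mem_setOf_eq]
      constructor
      · rintro ⟨hP, hsub⟩
        exact ⟨hP, (St3.pc_of_star f star hRN P hP I).mp hsub⟩
      · rintro ⟨hP, hsub⟩
        exact ⟨hP, (St3.pc_of_star f star hRN P hP I).mpr hsub⟩
  · rintro ⟨-, -, hc⟩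
    intro J hJ I hI
    have pc : ∀ P : TwoSidedIdeal S, IsPrimeTwoSided P →
        (rCorr f P ⊆ zarV (I : Set R) ↔ extSet f (I : Set R) ⊆ (P : Set S)) := by
      intro P hP
      constructor
      · intro h
        have hz : P ∈ zarV (extSet f (I : Set R)) := by rw [← hc I]; exact ⟨hP, h⟩
        exact hz.2
      · intro h
        have hz : P ∈ {P | IsPrimeTwoSided P ∧ rCorr f P ⊆ zarV (I : Set R)} := by
          rw [hc I]; exact ⟨hP, h⟩
        exact hz.2
    constructor
    · intro h P hPz
      refine ⟨hPz.1, ?_⟩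
      refine (pc P hPz.1).mp ?_
      intro Q hQmin
      refine ⟨hQmin.1, ?_⟩
      have hQz : Q ∈ zarV (f ⁻¹' (J : Set S)) :=
        ⟨hQmin.1, fun x hx => hQmin.2.1 (hPz.2 hx)⟩
      exact (h hQz).2
    · intro h Q hQz
      obtain ⟨hQ, hsub⟩ := hQz
      refine ⟨hQ, ?_⟩
      obtain ⟨t, Pf, hPf, hPint⟩ := St3.finitely_many_primes J hJ (hSG J hJ)
      have hprods : ∀ g : Fin t → R, (∀ i, g i ∈ St3.pbF f (Pf i)) →
          (List.ofFn g).prod ∈ Q := by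
        intro g hg
        have hfp : f (List.ofFn g).prod ∈ (J : Set S) := by
          rw [map_list_prod, List.map_ofFn, ← hPint]
          refine Set.mem_iInter.mpr fun i => ?_
          exact St3.list_prod_mem _
            ⟨f (g i), List.mem_ofFn.mpr ⟨i, rfl⟩, (St3.mem_pbF f).mp (hg i)⟩
        exact hsub hfp
      obtain ⟨i, hi⟩ := St3.prime_of_prod hQ (fun i => St3.pbF f (Pf i)) hprods
      have hPz : Pf i ∈ zarV (J : Set S) := ⟨(hPf i).1, TwoSidedIdeal.le_iff.mp (hPf i).2⟩
      have hext : extSet f (I : Set R) ⊆ ((Pf i : TwoSidedIdeal S) : Set S) := (h hPz).2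
      have hrc : rCorr f (Pf i) ⊆ zarV (I : Set R) := (pc (Pf i) (hPf i).1).mpr hext
      have hfPQ : f ⁻¹' ((Pf i : TwoSidedIdeal S) : Set S) ⊆ (Q : Set R) :=
        fun x hx => hi ((St3.mem_pbF f).mpr hx)
      obtain ⟨Q₀, hQ₀min, hQ₀le⟩ := St3.exists_minimalOver hQ hfPQ
      exact fun x hx => hQ₀le ((hrc hQ₀min).2 hx)
end

section
/- Let f : R → S be a ring homomorphism such that every semiprime factor ring of R and of S is left or right Goldie and the prime radical of every factor ring of R and of S is nilpotent, and assume in addition that S is left noetherian. Then λ is a left adjoint to ρ if and only if for each prime ideal Q of R there is a positive integer t such that f(Q)^t S ⊆ S f(Q), where f(Q)^t denotes the set of sums of products of t elements of f(Q). -/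
section St4AuxSection
set_option linter.unusedVariables false
set_option linter.unnecessarySimpa false

namespace St4Aux

open TwoSidedIdeal

variable {A B : Type*} [Ring A] [Ring B]

lemma eq_top_of_one_mem {P : TwoSidedIdeal A} (h : (1:A) ∈ P) : P = ⊤ := by
  refine SetLike.ext fun x => ?_
  simp only [TwoSidedIdeal.mem_top, iff_true]
  simpa using P.mul_mem_left x 1 h

lemma one_not_mem {P : TwoSidedIdeal A} (hP : IsPrimeTwoSided P) : (1:A) ∉ P :=
  fun h => hP.1 (eq_top_of_one_mem h)

lemma exists_ne_zero_of_ne_bot {I : TwoSidedIdeal A} (h : I ≠ ⊥) :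
    ∃ x ∈ I, x ≠ 0 := by
  by_contra hc
  push_neg at hc
  exact h (SetLike.ext fun x => by
    simp only [TwoSidedIdeal.mem_bot]
    exact ⟨fun hx => hc x hx, fun hx => by simp [hx]⟩)

/-- generating set for the two-sided ideal generated by `X`. -/
def genSet (X : Set A) : Set A := {z | ∃ r a s, a ∈ X ∧ z = r * a * s}

/-- The two-sided ideal generated by a set. -/
def genIdeal (X : Set A) : TwoSidedIdeal A :=
  TwoSidedIdeal.mk' (AddSubgroup.closure (genSet X) : AddSubgroup A)
    (AddSubgroup.zero_mem _)
    (fun hx hy => AddSubgroup.add_mem _ hx hy)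
    (fun hx => AddSubgroup.neg_mem _ hx)
    (by
      intro x y hy
      refine AddSubgroup.closure_induction
        (fun z hz => ?_) (by simpa using AddSubgroup.zero_mem _)
        (fun a b _ _ ha hb => by simpa [mul_add] using AddSubgroup.add_mem _ ha hb)
        (fun a _ ha => by simpa [mul_neg] using AddSubgroup.neg_mem _ ha) hy
      · obtain ⟨r, a, s, haX, rfl⟩ := hz
        exact AddSubgroup.subset_closure ⟨x * r, a, s, haX, by simp [mul_assoc]⟩)
    (by
      intro x y hx
      refine AddSubgroup.closure_induction
        (fun z hz => ?_) (by simpa using AddSubgroup.zero_mem _)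
        (fun a b _ _ ha hb => by simpa [add_mul] using AddSubgroup.add_mem _ ha hb)
        (fun a _ ha => by simpa [neg_mul] using AddSubgroup.neg_mem _ ha) hx
      · obtain ⟨r, a, s, haX, rfl⟩ := hz
        exact AddSubgroup.subset_closure ⟨r, a, s * y, haX, by simp [mul_assoc]⟩)

lemma mem_genIdeal_iff {X : Set A} {x : A} :
    x ∈ genIdeal X ↔ x ∈ AddSubgroup.closure (genSet X) := by
  simp [genIdeal, TwoSidedIdeal.mem_mk']

lemma mem_genIdeal_self {X : Set A} {a : A} (ha : a ∈ X) : a ∈ genIdeal X :=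
  mem_genIdeal_iff.2 <| AddSubgroup.subset_closure ⟨1, a, 1, ha, by simp⟩

lemma genIdeal_le {X : Set A} {I : TwoSidedIdeal A} (h : X ⊆ I) : genIdeal X ≤ I := by
  intro x hx
  rw [mem_genIdeal_iff] at hx
  refine AddSubgroup.closure_induction (fun z hz => ?_) I.zero_mem
    (fun a b _ _ ha hb => I.add_mem ha hb) (fun a _ ha => I.neg_mem ha) hx
  obtain ⟨r, a, s, haX, rfl⟩ := hz
  exact I.mul_mem_right _ _ (I.mul_mem_left _ _ (h haX))

/-- bilinear multiplication lemma: if all `x * s * y` with `x, y` generators lie in the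
two-sided ideal `P`, then products of the generated ideals lie in `P`. -/
lemma genIdeal_mul_genIdeal_subset {X Y : Set A} {P : TwoSidedIdeal A}
    (h : ∀ x ∈ X, ∀ y ∈ Y, ∀ s : A, x * s * y ∈ P) :
    ∀ a ∈ genIdeal X, ∀ b ∈ genIdeal Y, a * b ∈ P := by
  have key : ∀ g ∈ genSet X, ∀ b ∈ genIdeal Y, g * b ∈ P := by
    rintro g ⟨r, x, s, hx, rfl⟩ b hb
    rw [mem_genIdeal_iff] at hb
    refine AddSubgroup.closure_induction (fun z hz => ?_)
      (by simpa using P.zero_mem)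
      (fun a b _ _ ha hb => by simpa [mul_add] using P.add_mem ha hb)
      (fun a _ ha => by simpa [mul_neg] using P.neg_mem ha) hb
    obtain ⟨r', y, s', hy, rfl⟩ := hz
    have : r * x * s * (r' * y * s') = r * (x * (s * r') * y) * s' := by
      simp [mul_assoc]
    rw [this]
    exact P.mul_mem_right _ _ (P.mul_mem_left _ _ (h _ hx _ hy _))
  intro a ha b hb
  rw [mem_genIdeal_iff] at ha
  refine AddSubgroup.closure_induction (fun z hz => key _ hz b hb)
    (by simpa using P.zero_mem)
    (fun a a' _ _ ha ha' => by simpa [add_mul] using P.add_mem ha ha')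
    (fun a _ ha => by simpa [neg_mul] using P.neg_mem ha) ha

/-- Elementwise characterization of primality. -/
lemma prime_elem {P : TwoSidedIdeal A} (hP : IsPrimeTwoSided P) {x y : A}
    (h : ∀ s : A, x * s * y ∈ P) : x ∈ P ∨ y ∈ P := by
  have := hP.2 (genIdeal {x}) (genIdeal {y}) (by
    intro a ha b hb
    exact genIdeal_mul_genIdeal_subset
      (by rintro x' rfl y' rfl s; exact h s) a ha b hb)
  rcases this with h' | h'
  · exact Or.inl (h' (mem_genIdeal_self rfl))
  · exact Or.inr (h' (mem_genIdeal_self rfl))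

end St4Aux
namespace St4Aux

variable {A B : Type*} [Ring A] [Ring B]

/-- If every product matching a nonempty list of ideals lies in a prime `P`,
then one of the ideals is contained in `P`. -/
lemma prime_of_list_prod {P : TwoSidedIdeal A} (hP : IsPrimeTwoSided P) :
    ∀ L : List (TwoSidedIdeal A), L ≠ [] →
      (∀ a : List A, List.Forall₂ (fun x (I : TwoSidedIdeal A) => x ∈ I) a L → a.prod ∈ P) →
      ∃ I ∈ L, I ≤ P := by
  intro L
  induction L with
  | nil => intro h; exact absurd rfl h
  | cons I rest ih =>
    intro _ hprod
    match rest, ih with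
    | [], _ =>
      refine ⟨I, by simp, fun x hx => ?_⟩
      simpa using hprod [x] (by simpa using hx)
    | J :: rest', ih =>
      by_cases hI : I ≤ P
      · exact ⟨I, by simp, hI⟩
      · simp only [SetLike.le_def] at hI
        obtain ⟨c, hcI, hcP⟩ : ∃ c ∈ I, c ∉ P := by
          simpa [SetLike.le_def] using hI
        have hrest : ∀ a : List A,
            List.Forall₂ (fun x (K : TwoSidedIdeal A) => x ∈ K) a (J :: rest') → a.prod ∈ P := by
          intro a ha
          rcases ha with _ | ⟨hbJ, hys⟩
          rename_i b ys
          have hmid : ∀ s : A, c * s * (b * ys.prod) ∈ P := by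
            intro s
            have := hprod (c :: (s * b) :: ys)
              (List.Forall₂.cons hcI (List.Forall₂.cons (J.mul_mem_left s b hbJ) hys))
            simpa [mul_assoc] using this
          rcases prime_elem hP hmid with h | h
          · exact absurd h hcP
          · simpa using h
        obtain ⟨K, hK, hKP⟩ := ih (by simp) hrest
        exact ⟨K, by simp [hK], hKP⟩

lemma subset_primeRad (X : Set A) : X ⊆ primeRad X := fun _ hx _ _ hXP => hXP hx

lemma primeRad_mono {X Y : Set A} (h : X ⊆ Y) : primeRad X ⊆ primeRad Y :=
  fun a ha P hP hYP => ha P hP (h.trans hYP)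

lemma primeRad_primeRad (X : Set A) : primeRad (primeRad X) = primeRad X := by
  refine Set.Subset.antisymm (fun a ha P hP hXP => ?_) (subset_primeRad _)
  exact ha P hP (fun y hy => hy P hP hXP)

lemma primeRad_coe_of_prime {Q : TwoSidedIdeal A} (hQ : IsPrimeTwoSided Q) :
    primeRad (Q : Set A) = (Q : Set A) :=
  Set.Subset.antisymm (fun a ha => ha Q hQ subset_rfl) (subset_primeRad _)

/-- `primeRad X` as a two-sided ideal. -/
def primeRadIdeal (X : Set A) : TwoSidedIdeal A :=
  TwoSidedIdeal.mk' (primeRad X)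
    (fun P _ _ => P.zero_mem)
    (fun hx hy P hP hXP => P.add_mem (hx P hP hXP) (hy P hP hXP))
    (fun hx P hP hXP => P.neg_mem (hx P hP hXP))
    (fun {x y} hy P hP hXP => P.mul_mem_left x y (hy P hP hXP))
    (fun {x y} hx P hP hXP => P.mul_mem_right x y (hx P hP hXP))

@[simp] lemma coe_primeRadIdeal (X : Set A) :
    ((primeRadIdeal X : TwoSidedIdeal A) : Set A) = primeRad X := by
  unfold primeRadIdeal; exact TwoSidedIdeal.coe_mk' _ _ _ _ _ _

lemma zarV_subset_iff {X Y : Set A} : zarV X ⊆ zarV Y ↔ Y ⊆ primeRad X := by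
  constructor
  · intro h y hy P hP hXP
    exact (h ⟨hP, hXP⟩).2 hy
  · intro h P hP
    exact ⟨hP.1, fun y hy => h hy P hP.1 hP.2⟩

end St4Aux
namespace St4Aux

variable {A B : Type*} [Ring A] [Ring B]

/-- Pullback of a two-sided ideal along a ring hom. -/
def comapIdeal (g : A →+* B) (P : TwoSidedIdeal B) : TwoSidedIdeal A :=
  TwoSidedIdeal.mk' (g ⁻¹' (P : Set B))
    (by simp [Set.mem_preimage])
    (fun hx hy => by simp only [Set.mem_preimage, map_add] at *; exact P.add_mem hx hy)
    (fun hx => by simp only [Set.mem_preimage, map_neg] at *; exact P.neg_mem hx)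
    (fun {x y} hy => by
      simp only [Set.mem_preimage, map_mul] at *; exact P.mul_mem_left _ _ hy)
    (fun {x y} hx => by
      simp only [Set.mem_preimage, map_mul] at *; exact P.mul_mem_right _ _ hx)

@[simp] lemma mem_comapIdeal {g : A →+* B} {P : TwoSidedIdeal B} {x : A} :
    x ∈ comapIdeal g P ↔ g x ∈ P := by
  simp [comapIdeal, TwoSidedIdeal.mem_mk', Set.mem_preimage]

@[simp] lemma coe_comapIdeal {g : A →+* B} {P : TwoSidedIdeal B} :
    ((comapIdeal g P : TwoSidedIdeal A) : Set A) = g ⁻¹' (P : Set B) := by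
  simp [comapIdeal]

/-- Pushforward of a two-sided ideal along a surjective ring hom. -/
def mapIdeal (g : A →+* B) (hg : Function.Surjective g) (I : TwoSidedIdeal A) :
    TwoSidedIdeal B :=
  TwoSidedIdeal.mk' (g '' (I : Set A))
    (⟨0, I.zero_mem, map_zero g⟩)
    (fun hx hy => by
      obtain ⟨x, hx, rfl⟩ := hx; obtain ⟨y, hy, rfl⟩ := hy
      exact ⟨x + y, I.add_mem hx hy, map_add g x y⟩)
    (fun hx => by
      obtain ⟨x, hx, rfl⟩ := hx
      exact ⟨-x, I.neg_mem hx, map_neg g x⟩)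
    (fun {x y} hy => by
      obtain ⟨y, hy, rfl⟩ := hy
      obtain ⟨r, rfl⟩ := hg x
      exact ⟨r * y, I.mul_mem_left _ _ hy, map_mul g r y⟩)
    (fun {x y} hx => by
      obtain ⟨x, hx, rfl⟩ := hx
      obtain ⟨r, rfl⟩ := hg y
      exact ⟨x * r, I.mul_mem_right _ _ hx, map_mul g x r⟩)

@[simp] lemma mem_mapIdeal {g : A →+* B} {hg : Function.Surjective g}
    {I : TwoSidedIdeal A} {y : B} :
    y ∈ mapIdeal g hg I ↔ ∃ x ∈ I, g x = y := by
  unfold mapIdeal; refine (TwoSidedIdeal.mem_mk' _ _ _ _ _ _ _).trans ?_; simp [Set.mem_image]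

lemma comap_prime {g : A →+* B} (hg : Function.Surjective g) {P : TwoSidedIdeal B}
    (hP : IsPrimeTwoSided P) : IsPrimeTwoSided (comapIdeal g P) := by
  constructor
  · intro h
    refine hP.1 (eq_top_of_one_mem ?_)
    have : (1:A) ∈ comapIdeal g P := h ▸ TwoSidedIdeal.mem_top _
    simpa using (mem_comapIdeal.1 this)
  · intro I J hIJ
    have := hP.2 (mapIdeal g hg I) (mapIdeal g hg J) ?_
    · rcases this with h | h
      · exact Or.inl fun x hx => mem_comapIdeal.2 (h (mem_mapIdeal.2 ⟨x, hx, rfl⟩))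
      · exact Or.inr fun x hx => mem_comapIdeal.2 (h (mem_mapIdeal.2 ⟨x, hx, rfl⟩))
    · rintro a ha b hb
      obtain ⟨x, hx, rfl⟩ := mem_mapIdeal.1 ha
      obtain ⟨y, hy, rfl⟩ := mem_mapIdeal.1 hb
      rw [← map_mul]
      exact mem_comapIdeal.1 (hIJ x hx y hy)

lemma map_prime {g : A →+* B} (hg : Function.Surjective g) {P : TwoSidedIdeal A}
    (hker : ∀ x, g x = 0 → x ∈ P) (hP : IsPrimeTwoSided P) :
    IsPrimeTwoSided (mapIdeal g hg P) := by
  have hcomap : ∀ x, g x ∈ mapIdeal g hg P → x ∈ P := by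
    intro x hx
    obtain ⟨p, hp, hgp⟩ := mem_mapIdeal.1 hx
    have : x - p ∈ P := hker _ (by simp [map_sub, hgp])
    simpa using P.add_mem this hp
  constructor
  · intro h
    have : (1:B) ∈ mapIdeal g hg P := h ▸ TwoSidedIdeal.mem_top _
    have h1 : (1:A) ∈ P := hcomap 1 (by simpa using this)
    exact hP.1 (eq_top_of_one_mem h1)
  · intro I' J' hIJ
    have := hP.2 (comapIdeal g I') (comapIdeal g J') ?_
    · rcases this with h | h
      · refine Or.inl fun a ha => ?_
        obtain ⟨x, rfl⟩ := hg a
        exact mem_mapIdeal.2 ⟨x, h (mem_comapIdeal.2 ha), rfl⟩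
      · refine Or.inr fun a ha => ?_
        obtain ⟨x, rfl⟩ := hg a
        exact mem_mapIdeal.2 ⟨x, h (mem_comapIdeal.2 ha), rfl⟩
    · rintro x hx y hy
      exact hcomap _ (by
        rw [map_mul]
        exact hIJ _ (mem_comapIdeal.1 hx) _ (mem_comapIdeal.1 hy))

section Quotient

variable (I : TwoSidedIdeal A)

lemma mkQ_surjective : Function.Surjective (RingCon.mk' I.ringCon) :=
  fun y => Quot.inductionOn y (fun x => ⟨x, rfl⟩)

lemma mkQ_eq_zero_iff {x : A} : RingCon.mk' I.ringCon x = 0 ↔ x ∈ I := by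
  rw [TwoSidedIdeal.mem_iff]
  exact RingCon.eq I.ringCon (b := 0)

/-- The quotient ring of a semiprime ideal is a semiprime ring. -/
lemma quotient_semiprime (hI : primeRad (I : Set A) = (I : Set A)) :
    ∀ x : I.ringCon.Quotient,
      (∀ P : TwoSidedIdeal I.ringCon.Quotient, IsPrimeTwoSided P → x ∈ P) → x = 0 := by
  intro x hx
  obtain ⟨a, rfl⟩ := mkQ_surjective I x
  rw [mkQ_eq_zero_iff]
  rw [show (a ∈ I) = (a ∈ (I : Set A)) from rfl, ← hI]
  intro P hP hIP
  have hker : ∀ y : A, RingCon.mk' I.ringCon y = 0 → y ∈ P := by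
    intro y hy
    exact hIP ((mkQ_eq_zero_iff I).1 hy)
  have := hx (mapIdeal _ (mkQ_surjective I) P) (map_prime (mkQ_surjective I) hker hP)
  obtain ⟨p, hp, hgp⟩ := mem_mapIdeal.1 this
  have : a - p ∈ P := hker _ (by simp [map_sub, hgp])
  simpa using P.add_mem this hp

/-- Nilpotence transfer: if the prime radical of `A/I` is nilpotent, then some power of
`primeRad I` is contained in `I`, elementwise on lists. -/
lemma nilpotent_transfer (hN : NilpotentPrimeRad I.ringCon.Quotient) :
    ∃ n : ℕ, 0 < n ∧ ∀ l : List A, l.length = n →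
      (∀ x ∈ l, x ∈ primeRad (I : Set A)) → l.prod ∈ I := by
  obtain ⟨n, hn, hl⟩ := hN
  refine ⟨n, hn, fun l hlen hmem => ?_⟩
  rw [← mkQ_eq_zero_iff I, map_list_prod (RingCon.mk' I.ringCon) l]
  refine hl _ (by simp [hlen]) ?_
  intro x hx
  simp only [List.mem_map] at hx
  obtain ⟨a, ha, rfl⟩ := hx
  intro P hP _
  have hPA : IsPrimeTwoSided (comapIdeal (RingCon.mk' I.ringCon) P) :=
    comap_prime (mkQ_surjective I) hP
  have hIP : (I : Set A) ⊆ (comapIdeal (RingCon.mk' I.ringCon) P : Set A) := by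
    intro y hy
    simp only [coe_comapIdeal, Set.mem_preimage]
    have : RingCon.mk' I.ringCon y = 0 := (mkQ_eq_zero_iff I).2 hy
    simp [this]
  have := hmem a ha _ hPA hIP
  simpa using this

end Quotient

end St4Aux
namespace St4Aux

open MulOpposite

variable {A : Type*} [Ring A]

/-- Transport of a two-sided ideal to the opposite ring. -/
def opIdeal (P : TwoSidedIdeal A) : TwoSidedIdeal Aᵐᵒᵖ :=
  TwoSidedIdeal.mk' (unop ⁻¹' (P : Set A))
    (by simp)
    (fun hx hy => by
      simp only [Set.mem_preimage, unop_add] at *; exact P.add_mem hx hy)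
    (fun hx => by simp only [Set.mem_preimage, unop_neg] at *; exact P.neg_mem hx)
    (fun {x y} hy => by
      simp only [Set.mem_preimage, unop_mul] at *
      exact P.mul_mem_right _ _ hy)
    (fun {x y} hx => by
      simp only [Set.mem_preimage, unop_mul] at *
      exact P.mul_mem_left _ _ hx)

@[simp] lemma mem_opIdeal {P : TwoSidedIdeal A} {x : Aᵐᵒᵖ} :
    x ∈ opIdeal P ↔ x.unop ∈ P := by
  simp [opIdeal, TwoSidedIdeal.mem_mk']

/-- Transport of a two-sided ideal from the opposite ring. -/
def unopIdeal (P : TwoSidedIdeal Aᵐᵒᵖ) : TwoSidedIdeal A :=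
  TwoSidedIdeal.mk' (op ⁻¹' (P : Set Aᵐᵒᵖ))
    (by simp)
    (fun hx hy => by
      simp only [Set.mem_preimage, op_add] at *; exact P.add_mem hx hy)
    (fun hx => by simp only [Set.mem_preimage, op_neg] at *; exact P.neg_mem hx)
    (fun {x y} hy => by
      simp only [Set.mem_preimage, op_mul] at *
      exact P.mul_mem_right _ _ hy)
    (fun {x y} hx => by
      simp only [Set.mem_preimage, op_mul] at *
      exact P.mul_mem_left _ _ hx)

@[simp] lemma mem_unopIdeal {P : TwoSidedIdeal Aᵐᵒᵖ} {x : A} :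
    x ∈ unopIdeal P ↔ op x ∈ P := by
  simp [unopIdeal, TwoSidedIdeal.mem_mk']

lemma opIdeal_prime {P : TwoSidedIdeal A} (hP : IsPrimeTwoSided P) :
    IsPrimeTwoSided (opIdeal P) := by
  constructor
  · intro h
    have : (1 : Aᵐᵒᵖ) ∈ opIdeal P := h ▸ TwoSidedIdeal.mem_top _
    exact hP.1 (eq_top_of_one_mem (by simpa using this))
  · intro I' J' h
    have := hP.2 (unopIdeal J') (unopIdeal I') ?_
    · rcases this with h' | h'
      · refine Or.inr fun a ha => mem_opIdeal.2 (h' (mem_unopIdeal.2 (by simpa using ha)))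
      · refine Or.inl fun a ha => mem_opIdeal.2 (h' (mem_unopIdeal.2 (by simpa using ha)))
    · intro x hx y hy
      have := h _ (mem_unopIdeal.1 hy) _ (mem_unopIdeal.1 hx)
      have h2 : op y * op x ∈ opIdeal P := this
      simpa using mem_opIdeal.1 h2
  
lemma unopIdeal_prime {P : TwoSidedIdeal Aᵐᵒᵖ} (hP : IsPrimeTwoSided P) :
    IsPrimeTwoSided (unopIdeal P) := by
  constructor
  · intro h
    have : (1 : A) ∈ unopIdeal P := h ▸ TwoSidedIdeal.mem_top _
    exact hP.1 (eq_top_of_one_mem (by simpa using this))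
  · intro I J h
    have := hP.2 (opIdeal J) (opIdeal I) ?_
    · rcases this with h' | h'
      · exact Or.inr fun a ha => mem_unopIdeal.2 (h' (mem_opIdeal.2 (by simpa using ha)))
      · exact Or.inl fun a ha => mem_unopIdeal.2 (h' (mem_opIdeal.2 (by simpa using ha)))
    · intro x hx y hy
      have h1 := h _ (mem_opIdeal.1 hy) _ (mem_opIdeal.1 hx)
      have h2 : op (y.unop * x.unop) ∈ P := by
        rw [op_mul]
        simpa using h1
      simpa using h2

end St4Aux
namespace St4Aux

variable {T : Type*} [Ring T]

/-- The set of products of elements of two ideals. -/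
def mulSet (I J : TwoSidedIdeal T) : Set T := {z | ∃ a ∈ I, ∃ b ∈ J, z = a * b}

/-- In a semiprime ring, an ideal that squares to zero elementwise is zero. -/
lemma sq_zero_ideal (hsp : ∀ x : T, (∀ P : TwoSidedIdeal T, IsPrimeTwoSided P → x ∈ P) → x = 0)
    (N : TwoSidedIdeal T) (h : ∀ x ∈ N, ∀ y ∈ N, x * y = 0) :
    ∀ x ∈ N, x = 0 := by
  intro x hx
  refine hsp x fun P hP => ?_
  rcases hP.2 N N (fun a ha b hb => by rw [h a ha b hb]; exact P.zero_mem) with h' | h'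
  · exact h' hx
  · exact h' hx

/-- In a semiprime ring, left annihilation of ideals is symmetric. -/
lemma ann_symm (hsp : ∀ x : T, (∀ P : TwoSidedIdeal T, IsPrimeTwoSided P → x ∈ P) → x = 0)
    (I J : TwoSidedIdeal T) (h : ∀ a ∈ I, ∀ b ∈ J, a * b = 0) :
    ∀ b ∈ J, ∀ a ∈ I, b * a = 0 := by
  intro b hb a ha
  have hN : ∀ x ∈ genIdeal (mulSet J I), ∀ y ∈ genIdeal (mulSet J I), x * y = 0 := by
    intro x hx y hy
    have := genIdeal_mul_genIdeal_subset (P := (⊥ : TwoSidedIdeal T))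
      (X := mulSet J I) (Y := mulSet J I) ?_ x hx y hy
    · simpa using this
    · rintro _ ⟨b', hb', a', ha', rfl⟩ _ ⟨b'', hb'', a'', ha'', rfl⟩ s
      have h0 : a' * (s * b'') = 0 := by
        have : a' * s ∈ I := I.mul_mem_right _ _ ha'
        rw [← mul_assoc]
        exact h _ this _ hb''
      have : b' * a' * s * (b'' * a'') = b' * (a' * (s * b'')) * a'' := by
        simp [mul_assoc]
      rw [this, h0, mul_zero, zero_mul]
      simp
  exact sq_zero_ideal hsp _ hN _
    (mem_genIdeal_self ⟨b, hb, a, ha, rfl⟩)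

/-- If `x` lies in an ideal it annihilates on the left, then `x = 0` (semiprime). -/
lemma self_ann (hsp : ∀ x : T, (∀ P : TwoSidedIdeal T, IsPrimeTwoSided P → x ∈ P) → x = 0)
    (I : TwoSidedIdeal T) {x : T} (hx : x ∈ I) (h : ∀ u ∈ I, x * u = 0) : x = 0 := by
  have hN : ∀ y ∈ genIdeal ({x} : Set T), ∀ z ∈ genIdeal ({x} : Set T), y * z = 0 := by
    intro y hy z hz
    have := genIdeal_mul_genIdeal_subset (P := (⊥ : TwoSidedIdeal T))
      (X := ({x} : Set T)) (Y := ({x} : Set T)) ?_ y hy z hz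
    · simpa using this
    · intro x' hx' y' hy' s
      have hx'' : x' = x := hx'
      have hy'' : y' = x := hy'
      rw [hx'', hy'']
      have : s * x ∈ I := I.mul_mem_left s x hx
      have h0 : x * (s * x) = 0 := h _ this
      simp only [TwoSidedIdeal.mem_bot]
      rw [mul_assoc, h0]
  exact sq_zero_ideal hsp _ hN _ (mem_genIdeal_self rfl)

/-- Core finiteness result: a semiprime ring of finite left uniform dimension has
finitely many primes intersecting in zero. -/
lemma core_finite_primes
    (hsp : ∀ x : T, (∀ P : TwoSidedIdeal T, IsPrimeTwoSided P → x ∈ P) → x = 0)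
    {n : ℕ} (hU : UDimLE T T n) :
    ∃ (k : ℕ) (P : Fin k → TwoSidedIdeal T),
      (∀ i, IsPrimeTwoSided (P i)) ∧ ∀ x : T, (∀ i, x ∈ P i) → x = 0 := by
  classical
  set Fam : ∀ k : ℕ, (Fin k → TwoSidedIdeal T) → Prop :=
    fun k U => (∀ i, U i ≠ ⊥) ∧
      ∀ i j, i ≠ j → ∀ x ∈ U i, ∀ y ∈ U j, x * y = 0 with hFamDef
  have famle : ∀ k U, Fam k U → k ≤ n := by
    intro k U hF
    refine hU k (fun i => TwoSidedIdeal.asIdeal (U i)) (fun i => ?_) (fun i => ?_)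
    · intro hbot
      obtain ⟨x, hx, hx0⟩ := exists_ne_zero_of_ne_bot (hF.1 i)
      have : x ∈ (⊥ : Submodule T T) := hbot ▸ (TwoSidedIdeal.mem_asIdeal.2 hx)
      exact hx0 (by simpa using this)
    · rw [eq_bot_iff]
      intro x hx
      have hxi : x ∈ U i := TwoSidedIdeal.mem_asIdeal.1 hx.1
      have hsup := hx.2
      have hC : ∀ u ∈ U i, x * u = 0 := by
        have : ∀ u ∈ U i, x * u = 0 := by
          refine Submodule.iSup_induction
            (motive := fun y => ∀ u ∈ U i, y * u = 0)
            (fun j => ⨆ _ : j ∈ ({i}ᶜ : Set (Fin k)), TwoSidedIdeal.asIdeal (U j)) hsup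
            ?_ (by intro u _; simp) ?_
          · intro j y hy u hu
            have hy' : y ∈ ⨆ _ : j ∈ ({i}ᶜ : Set (Fin k)), TwoSidedIdeal.asIdeal (U j) := hy
            by_cases hj : j ∈ ({i}ᶜ : Set (Fin k))
            · rw [iSup_pos hj] at hy'
              exact hF.2 j i (by simpa using hj) y (TwoSidedIdeal.mem_asIdeal.1 hy') u hu
            · rw [iSup_neg hj] at hy'
              have : y = 0 := by simpa using hy'
              simp [this]
          · intro y z hy hz u hu
            rw [add_mul, hy u hu, hz u hu, add_zero]
        exact this
      simp only [Submodule.mem_bot]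
      exact self_ann hsp (U i) hxi hC
  set K : Set ℕ := {k | ∃ U, Fam k U} with hKdef
  have hK0 : 0 ∈ K := ⟨Fin.elim0, fun i => i.elim0, fun i => i.elim0⟩
  have hKbdd : ∀ k ∈ K, k ≤ n := fun k hk => by
    obtain ⟨U, hUF⟩ := hk; exact famle k U hUF
  set kmax := Nat.findGreatest (· ∈ K) n with hkm
  have hkmem : kmax ∈ K := Nat.findGreatest_spec (Nat.zero_le n) hK0
  have hkmaximal : ∀ m ∈ K, m ≤ kmax := fun m hm =>
    Nat.le_findGreatest (hKbdd m hm) hm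
  obtain ⟨U, hFam⟩ := hkmem
  -- uniformity of the members
  have hUnif : ∀ (i : Fin kmax) (W₁ W₂ : TwoSidedIdeal T), W₁ ≤ U i → W₂ ≤ U i →
      (∀ x ∈ W₁, ∀ y ∈ W₂, x * y = 0) → W₁ = ⊥ ∨ W₂ = ⊥ := by
    intro i W₁ W₂ hW₁ hW₂ hW
    by_contra hc
    push_neg at hc
    obtain ⟨h1, h2⟩ := hc
    set V : Fin (kmax + 1) → TwoSidedIdeal T := fun j =>
      if h : (j : ℕ) < kmax then (if (⟨j.1, h⟩ : Fin kmax) = i then W₁ else U ⟨j.1, h⟩)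
      else W₂ with hVdef
    have hVle : ∀ (j : Fin (kmax + 1)) (h : (j : ℕ) < kmax), V j ≤ U ⟨j.1, h⟩ := by
      intro j h
      simp only [hVdef, dif_pos h]
      split_ifs with he
      · rw [he]; exact hW₁
      · exact le_refl _
    have hVlast : ∀ (j : Fin (kmax + 1)), ¬ ((j : ℕ) < kmax) → V j = W₂ := by
      intro j h; simp [hVdef, dif_neg h]
    have hFamV : Fam (kmax + 1) V := by
      constructor
      · intro j
        by_cases h : (j : ℕ) < kmax
        · simp only [hVdef, dif_pos h]
          split_ifs with he
          · exact h1
          · exact hFam.1 _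
        · rw [hVlast j h]; exact h2
      · intro j₁ j₂ hne x hx y hy
        by_cases ha : (j₁ : ℕ) < kmax <;> by_cases hb : (j₂ : ℕ) < kmax
        · -- both in the original range
          have hne' : (⟨j₁.1, ha⟩ : Fin kmax) ≠ ⟨j₂.1, hb⟩ := by
            intro h
            exact hne (Fin.ext (show j₁.val = j₂.val from congrArg (fun z : Fin kmax => z.val) h))
          by_cases he₁ : (⟨j₁.1, ha⟩ : Fin kmax) = i
          · have hx' : x ∈ U i := hW₁ (by
              have := hx
              simp only [hVdef, dif_pos ha, if_pos he₁] at this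
              exact this)
            have hy' : y ∈ U ⟨j₂.1, hb⟩ := hVle j₂ hb hy
            exact hFam.2 i ⟨j₂.1, hb⟩ (by rw [← he₁]; exact hne'.symm ∘ Eq.symm) x hx' y hy'
          · have hx' : x ∈ U ⟨j₁.1, ha⟩ := hVle j₁ ha hx
            by_cases he₂ : (⟨j₂.1, hb⟩ : Fin kmax) = i
            · have hy' : y ∈ U i := hW₁ (by
                have := hy
                simp only [hVdef, dif_pos hb, if_pos he₂] at this
                exact this)
              exact hFam.2 ⟨j₁.1, ha⟩ i he₁ x hx' y hy'
            · have hy' : y ∈ U ⟨j₂.1, hb⟩ := hVle j₂ hb hy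
              exact hFam.2 _ _ hne' x hx' y hy'
        · -- j₂ is the last index
          rw [hVlast j₂ hb] at hy
          by_cases he₁ : (⟨j₁.1, ha⟩ : Fin kmax) = i
          · have hx' : x ∈ W₁ := by
              have := hx; simp only [hVdef, dif_pos ha, if_pos he₁] at this; exact this
            exact hW x hx' y hy
          · have hx' : x ∈ U ⟨j₁.1, ha⟩ := hVle j₁ ha hx
            exact hFam.2 ⟨j₁.1, ha⟩ i he₁ x hx' y (hW₂ hy)
        · -- j₁ is the last index
          rw [hVlast j₁ ha] at hx
          by_cases he₂ : (⟨j₂.1, hb⟩ : Fin kmax) = i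
          · have hy' : y ∈ W₁ := by
              have := hy; simp only [hVdef, dif_pos hb, if_pos he₂] at this; exact this
            exact ann_symm hsp W₁ W₂ hW x hx y hy'
          · have hy' : y ∈ U ⟨j₂.1, hb⟩ := hVle j₂ hb hy
            exact ann_symm hsp (U ⟨j₂.1, hb⟩) W₂
              (fun a hha b hhb => hFam.2 _ i he₂ a hha b (hW₂ hhb)) x hx y hy'
        · -- impossible: both are the last index
          exfalso
          have : j₁ = j₂ := Fin.ext (by omega)
          exact hne this
    have := hkmaximal (kmax + 1) ⟨V, hFamV⟩
    omega
  -- the annihilator primes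
  set annU : Fin kmax → TwoSidedIdeal T := fun i =>
    TwoSidedIdeal.mk' {x | ∀ u ∈ U i, x * u = 0}
      (fun u _ => zero_mul u)
      (fun {x y} hx hy u hu => by rw [add_mul, hx u hu, hy u hu, add_zero])
      (fun {x} hx u hu => by rw [neg_mul, hx u hu, neg_zero])
      (fun {x y} hy u hu => by rw [mul_assoc, hy u hu, mul_zero])
      (fun {x y} hx u hu => by
        rw [mul_assoc]
        exact hx _ ((U i).mul_mem_left y u hu)) with hannUdef
  have mem_annU : ∀ i x, x ∈ annU i ↔ ∀ u ∈ U i, x * u = 0 := by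
    intro i x
    simp [hannUdef, TwoSidedIdeal.mem_mk']
  refine ⟨kmax, annU, fun i => ?_, fun x hx => ?_⟩
  · constructor
    · intro htop
      obtain ⟨u₀, hu₀, hu₀0⟩ := exists_ne_zero_of_ne_bot (hFam.1 i)
      have : (1:T) ∈ annU i := htop ▸ TwoSidedIdeal.mem_top _
      exact hu₀0 (by simpa using (mem_annU i 1).1 this u₀ hu₀)
    · intro I J hIJ
      by_cases hJ : J ≤ annU i
      · exact Or.inr hJ
      · left
        rw [SetLike.le_def] at hJ
        push_neg at hJ
        obtain ⟨b₀, hb₀J, hb₀⟩ := hJ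
        rw [mem_annU] at hb₀
        push_neg at hb₀
        obtain ⟨u₀, hu₀, hbu₀⟩ := hb₀
        set W₁ := genIdeal (mulSet I (U i)) with hW₁def
        set W₂ := genIdeal (mulSet J (U i)) with hW₂def
        have hW₁le : W₁ ≤ U i := genIdeal_le (by
          rintro _ ⟨a, _, u, hu, rfl⟩; exact (U i).mul_mem_left a u hu)
        have hW₂le : W₂ ≤ U i := genIdeal_le (by
          rintro _ ⟨a, _, u, hu, rfl⟩; exact (U i).mul_mem_left a u hu)
        have hprod : ∀ x ∈ W₁, ∀ y ∈ W₂, x * y = 0 := by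
          intro x hx y hy
          have := genIdeal_mul_genIdeal_subset (P := (⊥ : TwoSidedIdeal T))
            (X := mulSet I (U i)) (Y := mulSet J (U i)) ?_ x hx y hy
          · simpa using this
          · rintro _ ⟨a, ha, u, hu, rfl⟩ _ ⟨b, hb, u', hu', rfl⟩ s
            have husb : u * s * b ∈ J := J.mul_mem_left _ _ hb
            have h1 : a * (u * s * b) ∈ annU i := hIJ a ha _ husb
            have h2 : a * (u * s * b) * u' = 0 := (mem_annU i _).1 h1 u' hu'
            simp only [TwoSidedIdeal.mem_bot]
            calc a * u * s * (b * u') = a * (u * s * b) * u' := by simp [mul_assoc]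
            _ = 0 := h2
        rcases hUnif i W₁ W₂ hW₁le hW₂le hprod with h | h
        · intro a ha
          rw [mem_annU]
          intro u hu
          have : a * u ∈ W₁ := mem_genIdeal_self ⟨a, ha, u, hu, rfl⟩
          rw [h] at this
          simpa using this
        · exfalso
          have : b₀ * u₀ ∈ W₂ := mem_genIdeal_self ⟨b₀, hb₀J, u₀, hu₀, rfl⟩
          rw [h] at this
          exact hbu₀ (by simpa using this)
  · -- intersection is zero
    by_contra hx0
    set W : TwoSidedIdeal T :=
      TwoSidedIdeal.mk' {y | ∀ i, ∀ u ∈ U i, y * u = 0}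
        (fun i u _ => zero_mul u)
        (fun {x y} hx hy i u hu => by rw [add_mul, hx i u hu, hy i u hu, add_zero])
        (fun {x} hx i u hu => by rw [neg_mul, hx i u hu, neg_zero])
        (fun {x y} hy i u hu => by rw [mul_assoc, hy i u hu, mul_zero])
        (fun {x y} hx i u hu => by
          rw [mul_assoc]
          exact hx i _ ((U i).mul_mem_left y u hu)) with hWdef
    have mem_W : ∀ y, y ∈ W ↔ ∀ i, ∀ u ∈ U i, y * u = 0 := by
      intro y; simp [hWdef, TwoSidedIdeal.mem_mk']
    have hxW : x ∈ W := (mem_W x).2 (fun i => (mem_annU i x).1 (hx i))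
    have hWne : W ≠ ⊥ := by
      intro h
      rw [h] at hxW
      exact hx0 (by simpa using hxW)
    set V : Fin (kmax + 1) → TwoSidedIdeal T := fun j =>
      if h : (j : ℕ) < kmax then U ⟨j.1, h⟩ else W with hVdef
    have hVlast : ∀ (j : Fin (kmax + 1)), ¬ ((j : ℕ) < kmax) → V j = W := by
      intro j h; simp [hVdef, dif_neg h]
    have hFamV : Fam (kmax + 1) V := by
      constructor
      · intro j
        by_cases h : (j : ℕ) < kmax
        · simp only [hVdef, dif_pos h]; exact hFam.1 _
        · rw [hVlast j h]; exact hWne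
      · intro j₁ j₂ hne a ha b hb
        by_cases h₁ : (j₁ : ℕ) < kmax <;> by_cases h₂ : (j₂ : ℕ) < kmax
        · simp only [hVdef, dif_pos h₁] at ha
          simp only [hVdef, dif_pos h₂] at hb
          refine hFam.2 ⟨j₁.1, h₁⟩ ⟨j₂.1, h₂⟩ ?_ a ha b hb
          intro h
          exact hne (Fin.ext (show j₁.val = j₂.val from congrArg (fun z : Fin kmax => z.val) h))
        · simp only [hVdef, dif_pos h₁] at ha
          rw [hVlast j₂ h₂] at hb
          exact ann_symm hsp W (U ⟨j₁.1, h₁⟩)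
            (fun w hw u hu => (mem_W w).1 hw _ u hu) a ha b hb
        · rw [hVlast j₁ h₁] at ha
          simp only [hVdef, dif_pos h₂] at hb
          exact (mem_W a).1 ha _ b hb
        · exfalso; exact hne (Fin.ext (by omega))
    have := hkmaximal (kmax + 1) ⟨V, hFamV⟩
    omega

end St4Aux
namespace St4Aux

open MulOpposite

variable {T : Type*} [Ring T]

lemma finite_primes_of_goldie
    (hsp : ∀ x : T, (∀ P : TwoSidedIdeal T, IsPrimeTwoSided P → x ∈ P) → x = 0)
    (hG : LeftOrRightGoldie T) :
    ∃ (k : ℕ) (P : Fin k → TwoSidedIdeal T),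
      (∀ i, IsPrimeTwoSided (P i)) ∧ ∀ x : T, (∀ i, x ∈ P i) → x = 0 := by
  rcases hG with hL | hR
  · obtain ⟨n, hn⟩ := hL.1
    exact core_finite_primes hsp hn
  · obtain ⟨n, hn⟩ := hR.1
    have hsp' : ∀ x : Tᵐᵒᵖ,
        (∀ P : TwoSidedIdeal Tᵐᵒᵖ, IsPrimeTwoSided P → x ∈ P) → x = 0 := by
      intro x hx
      have : x.unop = 0 := by
        refine hsp x.unop fun P hP => ?_
        have := hx (opIdeal P) (opIdeal_prime hP)
        simpa using this
      rw [← op_unop x, this, op_zero]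
    obtain ⟨k, P, hP, hint⟩ := core_finite_primes hsp' hn
    refine ⟨k, fun i => unopIdeal (P i), fun i => unopIdeal_prime (hP i), ?_⟩
    intro x hx
    have : op x = 0 := hint (op x) (fun i => by simpa using hx i)
    simpa using this

/-- A semiprime ideal in a ring with the Goldie property on semiprime factors is a
finite intersection of primes containing it. -/
lemma semiprime_is_finite_inter {A : Type*} [Ring A] (hAG : SemiprimeFactorsGoldie A)
    (I : TwoSidedIdeal A) (hI : primeRad (I : Set A) = (I : Set A)) :
    ∃ (k : ℕ) (Q : Fin k → TwoSidedIdeal A),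
      (∀ i, IsPrimeTwoSided (Q i)) ∧ (∀ i, (I : Set A) ⊆ (Q i : Set A)) ∧
        ∀ x : A, (∀ i, x ∈ Q i) → x ∈ I := by
  have hsp := quotient_semiprime I hI
  obtain ⟨k, P, hP, hint⟩ := finite_primes_of_goldie hsp (hAG I hI)
  refine ⟨k, fun i => comapIdeal (RingCon.mk' I.ringCon) (P i),
    fun i => comap_prime (mkQ_surjective I) (hP i), fun i => ?_, fun x hx => ?_⟩
  · intro y hy
    simp only [SetLike.mem_coe, coe_comapIdeal, Set.mem_preimage]
    have : RingCon.mk' I.ringCon y = 0 := (mkQ_eq_zero_iff I).2 hy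
    rw [this]
    exact (P i).zero_mem
  · have : RingCon.mk' I.ringCon x = 0 :=
      hint _ (fun i => mem_comapIdeal.1 (hx i))
    exact (mkQ_eq_zero_iff I).1 this

end St4Aux
namespace St4Aux

open Pointwise

variable {R S : Type*} [Ring R] [Ring S] (f : R →+* S)

/-- `extSet` as a two-sided ideal. -/
def extIdeal (X : Set R) : TwoSidedIdeal S :=
  TwoSidedIdeal.mk' (extSet f X)
    (fun s => by rw [zero_mul]; exact Ideal.zero_mem _)
    (fun {x y} hx hy s => by rw [add_mul]; exact Ideal.add_mem _ (hx s) (hy s))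
    (fun {x} hx s => by rw [neg_mul]; exact neg_mem (hx s))
    (fun {x y} hy s => by
      rw [mul_assoc]
      have := (Ideal.span (f '' X)).smul_mem x (hy s)
      simpa using this)
    (fun {x y} hx s => by rw [mul_assoc]; exact hx (y * s))

@[simp] lemma mem_extIdeal {X : Set R} {a : S} :
    a ∈ extIdeal f X ↔ a ∈ extSet f X := by
  unfold extIdeal; exact TwoSidedIdeal.mem_mk' _ _ _ _ _ _ _

@[simp] lemma coe_extIdeal {X : Set R} :
    ((extIdeal f X : TwoSidedIdeal S) : Set S) = extSet f X := by
  unfold extIdeal; exact TwoSidedIdeal.coe_mk' _ _ _ _ _ _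

lemma extSet_mono {X Y : Set R} (h : X ⊆ Y) : extSet f X ⊆ extSet f Y := by
  intro a ha s
  exact Ideal.span_mono (Set.image_mono h) (ha s)

lemma span_mul_gen {C : Set R} {w : S} (hw : w ∈ Ideal.span (f '' C)) {D : Set R}
    {d : R} (hd : d ∈ D) : w * f d ∈ Ideal.span (f '' (C * D)) := by
  refine Submodule.span_induction (p := fun w _ => w * f d ∈ Ideal.span (f '' (C * D)))
    ?_ ?_ ?_ ?_ hw
  · rintro _ ⟨c, hc, rfl⟩
    show f c * f d ∈ _
    rw [← map_mul]
    exact Ideal.subset_span ⟨c * d, Set.mul_mem_mul hc hd, rfl⟩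
  · show (0 : S) * f d ∈ _
    rw [zero_mul]; exact Ideal.zero_mem _
  · intro x y _ _ hx hy
    show (x + y) * f d ∈ _
    rw [add_mul]; exact Ideal.add_mem _ hx hy
  · intro a x _ hx
    show (a • x) * f d ∈ _
    rw [smul_eq_mul, mul_assoc]
    have := (Ideal.span (f '' (C * D))).smul_mem a hx
    simpa using this

/-- The key stepping lemma. -/
lemma mul_mem_span_mul {C D : Set R} {y : S} (hy : y ∈ Ideal.span (f '' D)) :
    ∀ z : S, (∀ s, z * s ∈ Ideal.span (f '' C)) →
      z * y ∈ Ideal.span (f '' (C * D)) := by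
  refine Submodule.span_induction
    (p := fun y _ => ∀ z : S, (∀ s, z * s ∈ Ideal.span (f '' C)) →
      z * y ∈ Ideal.span (f '' (C * D))) ?_ ?_ ?_ ?_ hy
  · rintro _ ⟨d, hd, rfl⟩ z hz
    exact span_mul_gen f (by simpa using hz 1) hd
  · intro z _
    show z * 0 ∈ _
    rw [mul_zero]; exact Ideal.zero_mem _
  · intro x y _ _ hx hy z hz
    show z * (x + y) ∈ _
    rw [mul_add]; exact Ideal.add_mem _ (hx z hz) (hy z hz)
  · intro a x _ hx z hz
    show z * (a • x) ∈ _
    rw [smul_eq_mul, ← mul_assoc]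
    exact hx (z * a) (fun s => by rw [mul_assoc]; exact hz (a * s))

/-- Product of a list of sets. -/
def setProdList : List (Set R) → Set R := fun L => L.foldr (· * ·) {1}

lemma chain_lemma : ∀ {zs : List S} {Cs : List (Set R)},
    List.Forall₂ (fun z C => ∀ s, z * s ∈ Ideal.span (f '' C)) zs Cs →
    ∀ s, zs.prod * s ∈ Ideal.span (f '' setProdList Cs) := by
  intro zs Cs h
  induction h with
  | nil =>
    intro s
    have h1 : (1 : S) ∈ Ideal.span (f '' setProdList ([] : List (Set R))) := by
      refine Ideal.subset_span ⟨1, ?_, map_one f⟩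
      simp [setProdList]
    have := (Ideal.span (f '' setProdList ([] : List (Set R)))).smul_mem s h1
    simpa using this
  | @cons z C zs Cs hz _ ih =>
    intro s
    have : (z :: zs).prod * s = z * (zs.prod * s) := by
      rw [List.prod_cons, mul_assoc]
    rw [this]
    exact mul_mem_span_mul f (ih s) z hz

lemma forall₂_replicate {α β : Type*} {r : α → β → Prop} :
    ∀ {a : List α} {n : ℕ} {b : β}, List.Forall₂ r a (List.replicate n b) →
      a.length = n ∧ ∀ x ∈ a, r x b := by
  intro a n
  induction n generalizing a with
  | zero =>
    intro b h
    rw [List.replicate_zero] at h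
    cases h
    exact ⟨rfl, by simp⟩
  | succ n ih =>
    intro b h
    rw [List.replicate_succ] at h
    rcases h with _ | ⟨hx, hrest⟩
    rename_i x a'
    obtain ⟨hlen, hall⟩ := ih hrest
    refine ⟨by simp [hlen], ?_⟩
    intro y hy
    rcases List.mem_cons.1 hy with rfl | hy
    · exact hx
    · exact hall y hy

lemma mem_setProdList_replicate {C : Set R} :
    ∀ {n : ℕ} {z : R}, z ∈ setProdList (List.replicate n C) →
      ∃ l : List R, l.length = n ∧ (∀ x ∈ l, x ∈ C) ∧ z = l.prod := by
  intro n
  induction n with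
  | zero =>
    intro z hz
    refine ⟨[], rfl, by simp, ?_⟩
    simp only [List.replicate_zero] at hz
    simpa [setProdList] using hz
  | succ n ih =>
    intro z hz
    rw [List.replicate_succ] at hz
    obtain ⟨c, hc, d, hd, rfl⟩ := Set.mem_mul.1 hz
    obtain ⟨l, hl, hlC, rfl⟩ := ih hd
    exact ⟨c :: l, by simp [hl], by
      intro x hx
      rcases List.mem_cons.1 hx with rfl | hx
      · exact hc
      · exact hlC x hx, by simp⟩

lemma mem_setProdList_inter {k : ℕ} (Q : Fin k → TwoSidedIdeal R) :
    ∀ (is : List (Fin k)) {z : R},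
      z ∈ setProdList (is.map fun i => ((Q i : Set R))) → ∀ i ∈ is, z ∈ Q i := by
  intro is
  induction is with
  | nil => intro z _ i hi; exact absurd hi (by simp)
  | cons i₀ is ih =>
    intro z hz i hi
    obtain ⟨c, hc, d, hd, rfl⟩ := Set.mem_mul.1 hz
    rcases List.mem_cons.1 hi with rfl | hi
    · exact (Q i).mul_mem_right c d hc
    · exact (Q i).mul_mem_left c d (ih hd i hi)

end St4Aux
namespace St4Aux

open Pointwise

variable {R S : Type*} [Ring R] [Ring S] (f : R →+* S)

lemma forall₂_replicate_of {α β : Type*} {r : α → β → Prop} :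
    ∀ {a : List α} {n : ℕ} {b : β}, a.length = n → (∀ x ∈ a, r x b) →
      List.Forall₂ r a (List.replicate n b) := by
  intro a
  induction a with
  | nil => rintro n b rfl _; exact List.Forall₂.nil
  | cons x a ih =>
    rintro n b rfl hall
    rw [List.length_cons, List.replicate_succ]
    exact List.Forall₂.cons (hall x (by simp)) (ih rfl (fun y hy => hall y (by simp [hy])))

lemma choose_preimages {X : Set R} :
    ∀ (l : List S), (∀ x ∈ l, x ∈ f '' X) →
      ∃ l' : List R, (∀ x ∈ l', x ∈ X) ∧ l'.map f = l := by
  intro l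
  induction l with
  | nil => exact fun _ => ⟨[], by simp, by simp⟩
  | cons x l ih =>
    intro h
    obtain ⟨a, ha, rfl⟩ := h x (by simp)
    obtain ⟨l', hl', hmap⟩ := ih (fun y hy => h y (by simp [hy]))
    exact ⟨a :: l', by
      intro y hy
      rcases List.mem_cons.1 hy with rfl | hy
      · exact ha
      · exact hl' y hy, by simp [hmap]⟩

/-- Direction (A): half of the adjunction, from the nilpotence hypothesis alone. -/
lemma dir_A (hRN : FactorRadsNilpotent R) {J : TwoSidedIdeal S} {I : TwoSidedIdeal R}
    (hJI : ∀ P : TwoSidedIdeal R, IsPrimeTwoSided P →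
      (f ⁻¹' (J : Set S)) ⊆ (P : Set R) → (I : Set R) ⊆ (P : Set R)) :
    zarV (J : Set S) ⊆ zarV (extSet f (I : Set R)) := by
  rintro P' ⟨hP', hJP'⟩
  refine ⟨hP', ?_⟩
  set D' := comapIdeal f P' with hD'
  set C := primeRad (D' : Set R) with hC
  have hfJD : (f ⁻¹' (J : Set S)) ⊆ (D' : Set R) := by
    intro x hx
    simp only [hD', coe_comapIdeal, Set.mem_preimage]
    exact hJP' hx
  have hIC : (I : Set R) ⊆ C := by
    intro a ha
    intro P hP hDP
    exact hJI P hP (hfJD.trans hDP) ha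
  obtain ⟨n, hn, hTn⟩ := nilpotent_transfer D' (hRN D')
  -- every `n`-fold product of elements of `extIdeal f C` lies in `P'`
  have hprod : ∀ a : List S,
      List.Forall₂ (fun x (K : TwoSidedIdeal S) => x ∈ K) a
        (List.replicate n (extIdeal f C)) → a.prod ∈ P' := by
    intro a ha
    obtain ⟨hlen, hall⟩ := forall₂_replicate ha
    have hchain := chain_lemma f (zs := a) (Cs := List.replicate n C)
      (by
        refine forall₂_replicate_of ?_ ?_
        · exact hlen
        · intro x hx
          exact (mem_extIdeal f).1 (hall x hx))
    have h1 := hchain 1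
    rw [mul_one] at h1
    have hsub : Ideal.span (f '' setProdList (List.replicate n C)) ≤
        TwoSidedIdeal.asIdeal P' := by
      rw [Ideal.span_le]
      rintro _ ⟨z, hz, rfl⟩
      obtain ⟨l, hln, hlC, rfl⟩ := mem_setProdList_replicate hz
      have : l.prod ∈ D' := hTn l hln hlC
      have : f l.prod ∈ P' := mem_comapIdeal.1 this
      simpa using this
    exact TwoSidedIdeal.mem_asIdeal.1 (hsub h1)
  have hne : List.replicate n (extIdeal f C) ≠ [] := by
    intro h
    have := congrArg List.length h
    simp at this
    omega
  obtain ⟨K, hK, hKP⟩ := prime_of_list_prod hP' _ hne hprod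
  have hKeq : K = extIdeal f C := List.eq_of_mem_replicate hK
  intro a ha
  refine hKP ?_
  exact hKeq ▸ (mem_extIdeal f).2 (extSet_mono f hIC ha)

/-- Direction (B): the other half of the adjunction, from the right-hand condition. -/
lemma dir_B (hRG : SemiprimeFactorsGoldie R)
    (hRHS : ∀ Q : TwoSidedIdeal R, IsPrimeTwoSided Q → ∃ t : ℕ, 0 < t ∧
        ∀ l : List S, l.length = t → (∀ x ∈ l, x ∈ f '' (Q : Set R)) →
          ∀ s : S, l.prod * s ∈ Ideal.span (f '' (Q : Set R)))
    {I : TwoSidedIdeal R} (hI : primeRad (I : Set R) = (I : Set R))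
    {J : TwoSidedIdeal S} (hext : extSet f (I : Set R) ⊆ (J : Set S)) :
    zarV (f ⁻¹' (J : Set S)) ⊆ zarV (I : Set R) := by
  rintro P ⟨hP, hfJP⟩
  refine ⟨hP, ?_⟩
  obtain ⟨k, Q, hQp, hIQ, hQI⟩ := semiprime_is_finite_inter hRG I hI
  choose t ht hts using fun i => hRHS (Q i) (hQp i)
  -- the master computation
  have master : ∀ is : List (Fin k), ∀ a : List R,
      List.Forall₂ (fun x (K : TwoSidedIdeal R) => x ∈ K) a
        (is.flatMap fun i => List.replicate (t i) (Q i)) →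
      ∀ s : S, f a.prod * s ∈
        Ideal.span (f '' setProdList (is.map fun i => ((Q i : Set R)))) := by
    intro is
    induction is with
    | nil =>
      intro a ha s
      simp only [List.flatMap_nil] at ha
      cases ha
      have := chain_lemma f (zs := ([] : List S)) (Cs := ([] : List (Set R)))
        List.Forall₂.nil s
      simpa using this
    | cons i is ih =>
      intro a ha s
      simp only [List.flatMap_cons] at ha
      have h₁ := List.forall₂_take_append a _ _ ha
      have h₂ := List.forall₂_drop_append a _ _ ha
      obtain ⟨hlen₁, hall₁⟩ := forall₂_replicate h₁
      set m₁ := (List.replicate (t i) (Q i)).length with hm₁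
      have hprodsplit : f a.prod = f (a.take m₁).prod * f (a.drop m₁).prod := by
        rw [← map_mul, ← List.prod_append, List.take_append_drop]
      have hz : ∀ s' : S, f (a.take m₁).prod * s' ∈ Ideal.span (f '' (Q i : Set R)) := by
        intro s'
        have := hts i ((a.take m₁).map f)
          (by rw [List.length_map]; exact hlen₁)
          (by
            intro x hx
            simp only [List.mem_map] at hx
            obtain ⟨y, hy, rfl⟩ := hx
            exact ⟨y, hall₁ y hy, rfl⟩) s'
        rwa [← map_list_prod f (a.take m₁)] at this
      have hy := ih (a.drop m₁) h₂ s
      have goal : f (a.take m₁).prod * (f (a.drop m₁).prod * s) ∈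
          Ideal.span (f '' ((Q i : Set R) *
            setProdList (is.map fun i => ((Q i : Set R))))) :=
        mul_mem_span_mul f hy _ hz
      rw [hprodsplit, mul_assoc]
      exact goal
  by_cases hk : k = 0
  · -- `I` is the whole ring; leads to a contradiction with primality of `P`
    subst hk
    exfalso
    have h1I : (1 : R) ∈ I := hQI 1 (fun i => i.elim0)
    have h1ext : (1 : S) ∈ extSet f (I : Set R) := by
      intro s
      have hf1 : f 1 ∈ f '' (I : Set R) := ⟨1, h1I, rfl⟩
      have := (Ideal.span (f '' (I : Set R))).smul_mem s (Ideal.subset_span hf1)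
      simpa using this
    have h1J : (1 : R) ∈ f ⁻¹' (J : Set S) := by
      simp only [Set.mem_preimage, map_one]
      exact hext h1ext
    exact (one_not_mem hP) (hfJP h1J)
  · set L := (List.finRange k).flatMap (fun i => List.replicate (t i) (Q i)) with hL
    have hne : L ≠ [] := by
      have hk0 : 0 < k := Nat.pos_of_ne_zero hk
      have : Q ⟨0, hk0⟩ ∈ L := by
        rw [hL]
        refine List.mem_flatMap.2 ⟨⟨0, hk0⟩, List.mem_finRange _, ?_⟩
        exact List.mem_replicate.2 ⟨by have := ht ⟨0, hk0⟩; omega, rfl⟩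
      exact List.ne_nil_of_mem this
    have hprod : ∀ a : List R,
        List.Forall₂ (fun x (K : TwoSidedIdeal R) => x ∈ K) a L → a.prod ∈ P := by
      intro a ha
      have hmem : f a.prod ∈ extSet f (I : Set R) := by
        intro s
        have := master (List.finRange k) a ha s
        refine Ideal.span_mono (Set.image_mono ?_) this
        intro z hz
        refine hQI z (fun i => ?_)
        exact mem_setProdList_inter Q (List.finRange k) hz i (List.mem_finRange i)
      exact hfJP (by
        simp only [Set.mem_preimage]
        exact hext hmem)
    obtain ⟨K, hK, hKP⟩ := prime_of_list_prod hP L hne hprod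
    obtain ⟨i, _, hKi⟩ := List.mem_flatMap.1 hK
    have : K = Q i := List.eq_of_mem_replicate hKi
    subst this
    exact fun x hx => hKP (hIQ i hx)

end St4Aux
namespace St4Aux

variable {R S : Type*} [Ring R] [Ring S] (f : R →+* S)

/-- Forward direction: the adjunction forces the power condition at each prime. -/
lemma dir_forward (hRN : FactorRadsNilpotent R) (hSN : FactorRadsNilpotent S)
    (hadj : LambdaLeftAdjointRho f) (Q : TwoSidedIdeal R) (hQ : IsPrimeTwoSided Q) :
    ∃ t : ℕ, 0 < t ∧
      ∀ l : List S, l.length = t → (∀ x ∈ l, x ∈ f '' (Q : Set R)) →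
        ∀ s : S, l.prod * s ∈ Ideal.span (f '' (Q : Set R)) := by
  set J := primeRadIdeal (extSet f (Q : Set R)) with hJdef
  have hJcoe : (J : Set S) = primeRad (extSet f (Q : Set R)) := coe_primeRadIdeal _
  have hJ : primeRad (J : Set S) = (J : Set S) := by
    rw [hJcoe, primeRad_primeRad]
  have hQsemi : primeRad (Q : Set R) = (Q : Set R) := primeRad_coe_of_prime hQ
  have hiff := hadj J hJ Q hQsemi
  have hright : zarV (J : Set S) ⊆ zarV (extSet f (Q : Set R)) := by
    rintro P' ⟨hP', hJP'⟩
    refine ⟨hP', ?_⟩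
    refine Set.Subset.trans ?_ hJP'
    rw [hJcoe]
    exact subset_primeRad _
  have hleft := hiff.2 hright
  set D := comapIdeal f J with hDdef
  have hQD : (Q : Set R) ⊆ primeRad (D : Set R) := by
    intro a ha P hP hDP
    have hPmem : P ∈ zarV (f ⁻¹' (J : Set S)) := by
      refine ⟨hP, ?_⟩
      refine Set.Subset.trans ?_ hDP
      rw [hDdef, coe_comapIdeal]
    exact (hleft hPmem).2 ha
  obtain ⟨m, hm, hTm⟩ := nilpotent_transfer D (hRN D)
  obtain ⟨n, hn, hTn⟩ := nilpotent_transfer (extIdeal f (Q : Set R)) (hSN _)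
  refine ⟨m * n, Nat.mul_pos hm hn, ?_⟩
  intro l hlen hmem s
  obtain ⟨l', hl'Q, rfl⟩ := choose_preimages f l hmem
  rw [List.length_map] at hlen
  -- chunk `l'` into `n` blocks of length `m`
  have chunk : ∀ (N : ℕ) (w : List R), w.length = m * N → (∀ x ∈ w, x ∈ Q) →
      ∃ v : List S, v.length = N ∧
        (∀ y ∈ v, y ∈ primeRad (extSet f (Q : Set R))) ∧ v.prod = f w.prod := by
    intro N
    induction N with
    | zero =>
      intro w hw _
      rw [Nat.mul_zero, List.length_eq_zero_iff] at hw
      subst hw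
      exact ⟨[], rfl, by simp, by simp⟩
    | succ N ih =>
      intro w hw hwQ
      have hmle : m ≤ w.length := by rw [hw, Nat.mul_succ]; omega
      have htake : (w.take m).length = m := by
        rw [List.length_take]; omega
      have hdrop : (w.drop m).length = m * N := by
        rw [List.length_drop, hw, Nat.mul_succ]; omega
      obtain ⟨v, hvlen, hvmem, hvprod⟩ := ih (w.drop m)
        hdrop (fun x hx => hwQ x (List.mem_of_mem_drop hx))
      have hblock : (w.take m).prod ∈ D := by
        refine hTm (w.take m) htake ?_
        intro x hx
        exact hQD (hwQ x (List.mem_of_mem_take hx))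
      have hb : f (w.take m).prod ∈ primeRad (extSet f (Q : Set R)) := by
        have := mem_comapIdeal.1 hblock
        rw [← hJcoe]
        exact this
      refine ⟨f (w.take m).prod :: v, by simp [hvlen], ?_, ?_⟩
      · intro y hy
        rcases List.mem_cons.1 hy with rfl | hy
        · exact hb
        · exact hvmem y hy
      · rw [List.prod_cons, hvprod, ← map_mul, ← List.prod_append, List.take_append_drop]
  obtain ⟨v, hvlen, hvmem, hvprod⟩ := chunk n l' hlen hl'Q
  have hvE : v.prod ∈ extIdeal f (Q : Set R) := by
    refine hTn v hvlen ?_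
    intro y hy
    rw [coe_extIdeal]
    exact hvmem y hy
  have : (l'.map f).prod = f l'.prod := (map_list_prod f l').symm
  rw [this, ← hvprod]
  exact (mem_extIdeal f).1 hvE s

end St4Aux


end St4AuxSection

/-- With the Goldie/nilpotence hypotheses of (3.7) and `S` left
noetherian, `λ` is a left adjoint to `ρ` if and only if for every prime ideal `Q` of
`R` there is `t > 0` with `f(Q)^t S ⊆ S f(Q)` (expressed on generators: every product
of `t` elements of `f(Q)` times any element of `S` lies in the left ideal `S f(Q)`;
this is equivalent to the inclusion for the set of sums of such products, since
`S f(Q)` is closed under addition). -/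
theorem statement_4 {R S : Type*} [Ring R] [Ring S] (f : R →+* S) [IsNoetherianRing S]
    (hRG : SemiprimeFactorsGoldie R) (hSG : SemiprimeFactorsGoldie S)
    (hRN : FactorRadsNilpotent R) (hSN : FactorRadsNilpotent S) :
    LambdaLeftAdjointRho f ↔
      (∀ Q : TwoSidedIdeal R, IsPrimeTwoSided Q → ∃ t : ℕ, 0 < t ∧
        ∀ l : List S, l.length = t → (∀ x ∈ l, x ∈ f '' (Q : Set R)) →
          ∀ s : S, l.prod * s ∈ Ideal.span (f '' (Q : Set R))) := by
  constructor
  · intro hadj Q hQ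
    exact St4Aux.dir_forward f hRN hSN hadj Q hQ
  · intro hRHS J hJ I hI
    constructor
    · intro h
      refine St4Aux.dir_A f hRN (J := J) (I := I) ?_
      intro P hP hsub
      exact (h ⟨hP, hsub⟩).2
    · intro h
      refine St4Aux.dir_B f hRG hRHS hI (J := J) ?_
      intro a ha
      rw [show ((a ∈ (J : Set S)) = (a ∈ primeRad (J : Set S))) from by rw [hJ]]
      intro P' hP' hJP'
      exact (h ⟨hP', hJP'⟩).2 ha
end

section
/- Let f : R → S be a ring homomorphism such that every semiprime factor ring of R is left or right Goldie and the prime radical of every factor ring of R is nilpotent. Then the following are equivalent: (i) for each prime ideal Q of R there is a positive integer t such that f(Q)^t S ⊆ S f(Q); (ii) for each ideal I of R there is a positive integer t such that f(I)^t S ⊆ S f(I). Here f(I)^t denotes the set of sums of products of t elements of f(I). -/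
namespace St5Aux

variable {A : Type*} [Ring A]

lemma sum_map_mul_left' {α : Type*} (L : List α) (g : α → A) (c : A) :
    (L.map fun p => c * g p).sum = c * (L.map g).sum := by
  induction L with
  | nil => simp
  | cons h t ih => simp [ih, mul_add]

lemma sum_map_mul_right' {α : Type*} (L : List α) (g : α → A) (c : A) :
    (L.map fun p => g p * c).sum = (L.map g).sum * c := by
  induction L with
  | nil => simp
  | cons h t ih => simp [ih, add_mul]

lemma sum_map_neg' {α : Type*} (L : List α) (g : α → A) :
    (L.map fun p => -g p).sum = -(L.map g).sum := by
  induction L with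
  | nil => simp
  | cons h t ih => simp [ih]; abel

lemma list_sum_mem (P : TwoSidedIdeal A) (L : List A) (h : ∀ z ∈ L, z ∈ P) : L.sum ∈ P := by
  induction L with
  | nil => simpa using P.zero_mem
  | cons a t ih =>
      rw [List.sum_cons]
      exact P.add_mem (h a (by simp)) (ih fun z hz => h z (by simp [hz]))

/-- The two-sided ideal generated by a single element. -/
def pIdeal (x : A) : TwoSidedIdeal A :=
  TwoSidedIdeal.mk' {z | ∃ L : List (A × A), z = (L.map fun p => p.1 * x * p.2).sum}
    ⟨[], rfl⟩
    (fun {a b} ha hb => by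
      obtain ⟨L1, rfl⟩ := ha; obtain ⟨L2, rfl⟩ := hb
      exact ⟨L1 ++ L2, by simp⟩)
    (fun {a} ha => by
      obtain ⟨L, rfl⟩ := ha
      refine ⟨L.map fun p => (-p.1, p.2), ?_⟩
      rw [List.map_map]
      rw [show ((fun p : A × A => p.1 * x * p.2) ∘ fun p : A × A => (-p.1, p.2))
        = fun p : A × A => -(p.1 * x * p.2) from funext fun p => by simp, sum_map_neg'])
    (fun {c a} ha => by
      obtain ⟨L, rfl⟩ := ha
      refine ⟨L.map fun p => (c * p.1, p.2), ?_⟩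
      rw [List.map_map]
      rw [show ((fun p : A × A => p.1 * x * p.2) ∘ fun p : A × A => (c * p.1, p.2))
        = fun p : A × A => c * (p.1 * x * p.2) from funext fun p => by simp [mul_assoc],
        sum_map_mul_left'])
    (fun {a c} ha => by
      obtain ⟨L, rfl⟩ := ha
      refine ⟨L.map fun p => (p.1, p.2 * c), ?_⟩
      rw [List.map_map]
      rw [show ((fun p : A × A => p.1 * x * p.2) ∘ fun p : A × A => (p.1, p.2 * c))
        = fun p : A × A => (p.1 * x * p.2) * c from funext fun p => by simp [mul_assoc],
        sum_map_mul_right'])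

lemma mem_pIdeal_iff {x z : A} :
    z ∈ pIdeal x ↔ ∃ L : List (A × A), z = (L.map fun p => p.1 * x * p.2).sum :=
  TwoSidedIdeal.mem_mk' _ _ _ _ _ _ _

lemma mem_pIdeal_self (x : A) : x ∈ pIdeal x :=
  mem_pIdeal_iff.mpr ⟨[(1, 1)], by simp⟩

lemma pIdeal_le {K : TwoSidedIdeal A} {x : A} (hx : x ∈ K) : pIdeal x ≤ K := by
  intro z hz
  obtain ⟨L, rfl⟩ := mem_pIdeal_iff.mp hz
  refine list_sum_mem K _ fun w hw => ?_
  obtain ⟨p, _, rfl⟩ := List.mem_map.mp hw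
  exact K.mul_mem_right _ _ (K.mul_mem_left _ _ hx)

lemma prime_mem_or_mem {P : TwoSidedIdeal A} (hP : IsPrimeTwoSided P) {x y : A}
    (h : ∀ a, x * a * y ∈ P) : x ∈ P ∨ y ∈ P := by
  have hcond : ∀ a ∈ pIdeal x, ∀ b ∈ pIdeal y, a * b ∈ P := by
    intro a ha b hb
    obtain ⟨L, rfl⟩ := mem_pIdeal_iff.mp ha
    obtain ⟨M, rfl⟩ := mem_pIdeal_iff.mp hb
    rw [← sum_map_mul_right']
    refine list_sum_mem P _ fun z hz => ?_
    obtain ⟨p, _, rfl⟩ := List.mem_map.mp hz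
    rw [← sum_map_mul_left']
    refine list_sum_mem P _ fun w hw => ?_
    obtain ⟨q, _, rfl⟩ := List.mem_map.mp hw
    rw [show p.1 * x * p.2 * (q.1 * y * q.2) = p.1 * (x * (p.2 * q.1) * y) * q.2 by
      simp [mul_assoc]]
    exact P.mul_mem_right _ _ (P.mul_mem_left _ _ (h _))
  rcases hP.2 (pIdeal x) (pIdeal y) hcond with h1 | h1
  · exact Or.inl (h1 (mem_pIdeal_self x))
  · exact Or.inr (h1 (mem_pIdeal_self y))

end St5Aux

namespace St5Aux

variable {A : Type*} [Ring A]

/-- Left annihilator of a two-sided ideal, as a two-sided ideal. -/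
def lann (U : TwoSidedIdeal A) : TwoSidedIdeal A :=
  TwoSidedIdeal.mk' {a | ∀ t ∈ (U : Set A), a * t = 0}
    (fun t _ => zero_mul t)
    (fun {a b} ha hb t ht => by rw [add_mul, ha t ht, hb t ht, add_zero])
    (fun {a} ha t ht => by rw [neg_mul, ha t ht, neg_zero])
    (fun {c a} ha t ht => by rw [mul_assoc, ha t ht, mul_zero])
    (fun {a c} ha t ht => by rw [mul_assoc]; exact ha _ (U.mul_mem_left c t ht))

lemma mem_lann {U : TwoSidedIdeal A} {a : A} :
    a ∈ lann U ↔ ∀ t ∈ (U : Set A), a * t = 0 :=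
  TwoSidedIdeal.mem_mk' _ _ _ _ _ _ _

lemma lann_coe (U : TwoSidedIdeal A) :
    (lann U : Set A) = {a | ∀ t ∈ (U : Set A), a * t = 0} :=
  Set.ext fun _ => mem_lann

lemma lann_antitone {U V : TwoSidedIdeal A} (h : U ≤ V) : lann V ≤ lann U := by
  intro a ha
  rw [mem_lann] at ha ⊢
  exact fun t ht => ha t (h ht)

section Semiprime

variable (hsp : ∀ x : A, (∀ a, x * a * x = 0) → x = 0)
include hsp

lemma ann_symm {U : TwoSidedIdeal A} {a : A} (h : ∀ t ∈ (U : Set A), a * t = 0) :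
    ∀ t ∈ (U : Set A), t * a = 0 := by
  intro u hu
  refine hsp _ fun b => ?_
  have h1 : a * (b * u) = 0 := h _ (U.mul_mem_left b u hu)
  rw [show u * a * b * (u * a) = u * (a * (b * u)) * a by simp [mul_assoc], h1, mul_zero,
    zero_mul]

lemma self_ann_eq_zero {U : TwoSidedIdeal A} {x : A} (hx : x ∈ U)
    (hx' : ∀ t ∈ (U : Set A), x * t = 0) : x = 0 :=
  hsp x fun a => by rw [mul_assoc]; exact hx' _ (U.mul_mem_left a x hx)

end Semiprime

lemma exists_max (hacc : ACCLeftAnn A) (F : Set (Set A))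
    (hF : ∀ X ∈ F, ∃ T : Set A, X = {a | ∀ t ∈ T, a * t = 0})
    (hne : F.Nonempty) : ∃ M ∈ F, ∀ X ∈ F, M ⊆ X → X = M := by
  by_contra hc
  push_neg at hc
  obtain ⟨X0, hX0⟩ := hne
  choose g hgF hgsub hgne using hc
  let step : {X : Set A // X ∈ F} → {X : Set A // X ∈ F} := fun p => ⟨g p.1 p.2, hgF p.1 p.2⟩
  let seq : ℕ → {X : Set A // X ∈ F} := fun n => step^[n] ⟨X0, hX0⟩
  have hseq : ∀ n, seq (n + 1) = step (seq n) := fun n => Function.iterate_succ_apply' step n _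
  obtain ⟨Nn, hNn⟩ := hacc (fun n => (seq n).1) (fun i => hF _ (seq i).2)
    (fun i => by show (seq i).1 ⊆ (seq (i+1)).1; rw [hseq]; exact hgsub _ _)
  refine hgne (seq Nn).1 (seq Nn).2 ?_
  have h1 : (seq (Nn + 1)).1 = (seq Nn).1 := hNn (Nn + 1) (Nat.le_succ Nn)
  show (step (seq Nn)).1 = (seq Nn).1
  rw [hseq] at h1
  exact h1

/-- The ideal of finite sums of products `j*u`, `j ∈ J`, `u ∈ U`. -/
def mulIdeal (J U : TwoSidedIdeal A) : TwoSidedIdeal A :=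
  TwoSidedIdeal.mk'
    {z | ∃ L : List (A × A), (∀ p ∈ L, p.1 ∈ J ∧ p.2 ∈ U) ∧ z = (L.map fun p => p.1 * p.2).sum}
    ⟨[], by simp, rfl⟩
    (fun {a b} ha hb => by
      obtain ⟨L1, hL1, rfl⟩ := ha; obtain ⟨L2, hL2, rfl⟩ := hb
      refine ⟨L1 ++ L2, ?_, by simp⟩
      intro p hp
      rcases List.mem_append.mp hp with h | h
      exacts [hL1 p h, hL2 p h])
    (fun {a} ha => by
      obtain ⟨L, hL, rfl⟩ := ha
      refine ⟨L.map fun p => (-p.1, p.2), ?_, ?_⟩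
      · intro p hp
        obtain ⟨q, hq, rfl⟩ := List.mem_map.mp hp
        exact ⟨J.neg_mem (hL q hq).1, (hL q hq).2⟩
      · rw [List.map_map]
        rw [show ((fun p : A × A => p.1 * p.2) ∘ fun p : A × A => (-p.1, p.2))
          = fun p : A × A => -(p.1 * p.2) from funext fun p => by simp, sum_map_neg'])
    (fun {c a} ha => by
      obtain ⟨L, hL, rfl⟩ := ha
      refine ⟨L.map fun p => (c * p.1, p.2), ?_, ?_⟩
      · intro p hp
        obtain ⟨q, hq, rfl⟩ := List.mem_map.mp hp
        exact ⟨J.mul_mem_left c q.1 (hL q hq).1, (hL q hq).2⟩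
      · rw [List.map_map]
        rw [show ((fun p : A × A => p.1 * p.2) ∘ fun p : A × A => (c * p.1, p.2))
          = fun p : A × A => c * (p.1 * p.2) from funext fun p => by simp [mul_assoc],
          sum_map_mul_left'])
    (fun {a c} ha => by
      obtain ⟨L, hL, rfl⟩ := ha
      refine ⟨L.map fun p => (p.1, p.2 * c), ?_, ?_⟩
      · intro p hp
        obtain ⟨q, hq, rfl⟩ := List.mem_map.mp hp
        exact ⟨(hL q hq).1, U.mul_mem_right q.2 c (hL q hq).2⟩
      · rw [List.map_map]
        rw [show ((fun p : A × A => p.1 * p.2) ∘ fun p : A × A => (p.1, p.2 * c))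
          = fun p : A × A => (p.1 * p.2) * c from funext fun p => by simp [mul_assoc],
          sum_map_mul_right'])

lemma mem_mulIdeal {J U : TwoSidedIdeal A} {z : A} :
    z ∈ mulIdeal J U ↔ ∃ L : List (A × A),
      (∀ p ∈ L, p.1 ∈ J ∧ p.2 ∈ U) ∧ z = (L.map fun p => p.1 * p.2).sum :=
  TwoSidedIdeal.mem_mk' _ _ _ _ _ _ _

lemma mulIdeal_le_right {J U : TwoSidedIdeal A} : mulIdeal J U ≤ U := by
  intro z hz
  obtain ⟨L, hL, rfl⟩ := mem_mulIdeal.mp hz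
  refine list_sum_mem U _ fun w hw => ?_
  obtain ⟨p, hp, rfl⟩ := List.mem_map.mp hw
  exact U.mul_mem_left p.1 p.2 (hL p hp).2

lemma mul_mem_mulIdeal {J U : TwoSidedIdeal A} {j u : A} (hj : j ∈ J) (hu : u ∈ U) :
    j * u ∈ mulIdeal J U :=
  mem_mulIdeal.mpr ⟨[(j, u)], by simp [hj, hu], by simp⟩

end St5Aux

namespace St5Aux

variable {A : Type*} [Ring A]

lemma core (hsp : ∀ x : A, (∀ a, x * a * x = 0) → x = 0) (hacc : ACCLeftAnn A) :
    ∃ L : List (TwoSidedIdeal A), (∀ P ∈ L, IsPrimeTwoSided P) ∧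
      ∀ x : A, (∀ P ∈ L, x ∈ P) → x = 0 := by
  classical
  set GOOD : TwoSidedIdeal A → Prop := fun K => ∃ L : List (TwoSidedIdeal A),
    (∀ P ∈ L, IsPrimeTwoSided P) ∧ ∀ x ∈ K, (∀ P ∈ L, x ∈ P) → x = 0 with hGOOD
  have step : ∀ K : TwoSidedIdeal A,
      (∀ K' : TwoSidedIdeal A, (lann K : Set A) ⊂ (lann K' : Set A) → GOOD K') → GOOD K := by
    intro K ih
    by_cases hK : ∀ x ∈ K, x = 0
    · exact ⟨[], by simp, fun x hx _ => hK x hx⟩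
    · push_neg at hK
      obtain ⟨x0, hx0K, hx0⟩ := hK
      obtain ⟨M, hMF, hMmax⟩ := exists_max hacc
        {X | ∃ V : TwoSidedIdeal A, V ≤ K ∧ (∃ v ∈ V, v ≠ 0) ∧ X = (lann V : Set A)}
        (by rintro X ⟨V, -, -, rfl⟩; exact ⟨(V : Set A), lann_coe V⟩)
        ⟨(lann (pIdeal x0) : Set A),
          pIdeal x0, pIdeal_le hx0K, ⟨x0, mem_pIdeal_self x0, hx0⟩, rfl⟩
      obtain ⟨U, hUK, ⟨u0, hu0U, hu0⟩, hM⟩ := hMF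
      subst hM
      have hPprime : IsPrimeTwoSided (lann U) := by
        constructor
        · intro htop
          have h1 : (1 : A) ∈ lann U := htop ▸ TwoSidedIdeal.mem_top _
          exact hu0 (by simpa using mem_lann.mp h1 u0 hu0U)
        · intro I J hIJ
          by_cases hJ : ∀ b ∈ J, ∀ t ∈ (U : Set A), b * t = 0
          · exact Or.inr fun b hb => mem_lann.mpr (hJ b hb)
          · push_neg at hJ
            obtain ⟨b0, hb0J, u1, hu1U, hbu⟩ := hJ
            have hWU : mulIdeal J U ≤ U := mulIdeal_le_right
            have hWF : (lann (mulIdeal J U) : Set A) ∈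
                {X | ∃ V : TwoSidedIdeal A, V ≤ K ∧ (∃ v ∈ V, v ≠ 0) ∧ X = (lann V : Set A)} :=
              ⟨mulIdeal J U, hWU.trans hUK, ⟨b0 * u1, mul_mem_mulIdeal hb0J hu1U, hbu⟩, rfl⟩
            have hWeq : (lann (mulIdeal J U) : Set A) = (lann U : Set A) :=
              hMmax _ hWF (lann_antitone hWU)
            left
            intro a ha
            have haW : a ∈ lann (mulIdeal J U) := by
              rw [mem_lann]
              intro w hw
              obtain ⟨L, hL, rfl⟩ := mem_mulIdeal.mp hw
              rw [← sum_map_mul_left']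
              refine List.sum_eq_zero fun z hz => ?_
              obtain ⟨p, hp, rfl⟩ := List.mem_map.mp hz
              have h2 : a * p.1 ∈ lann U := hIJ a ha p.1 (hL p hp).1
              rw [← mul_assoc]
              exact mem_lann.mp h2 p.2 (hL p hp).2
            have : a ∈ (lann U : Set A) := hWeq ▸ haW
            exact this
      have hu0K' : u0 ∈ lann (K ⊓ lann U) := by
        rw [mem_lann]
        intro t ht
        have ht2 : t ∈ lann U := ht.2
        exact ann_symm hsp (mem_lann.mp ht2) u0 hu0U
      have hu0K : u0 ∉ lann K := by
        intro hmem
        exact hu0 (self_ann_eq_zero hsp (hUK hu0U) (mem_lann.mp hmem))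
      have hstrict : (lann K : Set A) ⊂ (lann (K ⊓ lann U) : Set A) :=
        ⟨lann_antitone inf_le_left, fun hba => hu0K (hba hu0K')⟩
      obtain ⟨L', hL'p, hL'⟩ := ih _ hstrict
      refine ⟨lann U :: L', ?_, ?_⟩
      · intro P hP
        rcases List.mem_cons.mp hP with rfl | h
        exacts [hPprime, hL'p P h]
      · intro x hxK hall
        refine hL' x (⟨hxK, hall _ List.mem_cons_self⟩)
          fun P hP => hall P (List.mem_cons_of_mem _ hP)
  by_contra hbad
  have hbad' : ¬ GOOD ⊤ := by
    intro ⟨L, h1, h2⟩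
    exact hbad ⟨L, h1, fun x hx => h2 x (TwoSidedIdeal.mem_top _) hx⟩
  obtain ⟨M, hMF, hMmax⟩ := exists_max hacc {X | ∃ K : TwoSidedIdeal A, ¬ GOOD K ∧ X = (lann K : Set A)}
    (by rintro X ⟨K, -, rfl⟩; exact ⟨(K : Set A), lann_coe K⟩) ⟨_, ⊤, hbad', rfl⟩
  obtain ⟨K0, hK0bad, rfl⟩ := hMF
  refine hK0bad (step K0 fun K' hlt => ?_)
  by_contra hK'bad
  exact hlt.ne (hMmax _ ⟨K', hK'bad, rfl⟩ hlt.subset).symm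

end St5Aux

namespace St5Aux

variable {A : Type*} [Ring A]

open MulOpposite in
/-- Transfer of a two-sided ideal along `op`. -/
def opT (P : TwoSidedIdeal Aᵐᵒᵖ) : TwoSidedIdeal A :=
  TwoSidedIdeal.mk' {a | op a ∈ P}
    (by simp [P.zero_mem])
    (fun {a b} ha hb => by simpa using P.add_mem ha hb)
    (fun {a} ha => by simpa using P.neg_mem ha)
    (fun {c a} ha => by
      show op (c * a) ∈ P
      rw [op_mul]
      exact P.mul_mem_right _ _ ha)
    (fun {a c} ha => by
      show op (a * c) ∈ P
      rw [op_mul]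
      exact P.mul_mem_left _ _ ha)

open MulOpposite in
lemma mem_opT {P : TwoSidedIdeal Aᵐᵒᵖ} {a : A} : a ∈ opT P ↔ op a ∈ P :=
  TwoSidedIdeal.mem_mk' _ _ _ _ _ _ _

open MulOpposite in
/-- Transfer of a two-sided ideal along `unop`. -/
def unopT (I : TwoSidedIdeal A) : TwoSidedIdeal Aᵐᵒᵖ :=
  TwoSidedIdeal.mk' {x | unop x ∈ I}
    (by simp [I.zero_mem])
    (fun {a b} ha hb => by simpa using I.add_mem ha hb)
    (fun {a} ha => by simpa using I.neg_mem ha)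
    (fun {c a} ha => by
      show unop (c * a) ∈ I
      rw [unop_mul]
      exact I.mul_mem_right _ _ ha)
    (fun {a c} ha => by
      show unop (a * c) ∈ I
      rw [unop_mul]
      exact I.mul_mem_left _ _ ha)

open MulOpposite in
lemma mem_unopT {I : TwoSidedIdeal A} {x : Aᵐᵒᵖ} : x ∈ unopT I ↔ unop x ∈ I :=
  TwoSidedIdeal.mem_mk' _ _ _ _ _ _ _

open MulOpposite in
lemma opT_prime {P : TwoSidedIdeal Aᵐᵒᵖ} (hP : IsPrimeTwoSided P) :
    IsPrimeTwoSided (opT P) := by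
  constructor
  · intro htop
    have h1 : (1 : A) ∈ opT P := htop ▸ TwoSidedIdeal.mem_top _
    exact hP.1 (P.eq_top (by simpa using mem_opT.mp h1))
  · intro I J hIJ
    have := hP.2 (unopT J) (unopT I) ?_
    · rcases this with h | h
      · exact Or.inr fun b hb => mem_opT.mpr (h (mem_unopT.mpr (by simpa using hb)))
      · exact Or.inl fun a ha => mem_opT.mpr (h (mem_unopT.mpr (by simpa using ha)))
    · intro a ha b hb
      rw [mem_unopT] at ha hb
      have h2 : unop b * unop a ∈ opT P := hIJ _ hb _ ha
      rw [mem_opT] at h2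
      simpa [op_mul] using h2

lemma core' (hsp : ∀ x : A, (∀ a, x * a * x = 0) → x = 0) (hG : LeftOrRightGoldie A) :
    ∃ L : List (TwoSidedIdeal A), (∀ P ∈ L, IsPrimeTwoSided P) ∧
      ∀ x : A, (∀ P ∈ L, x ∈ P) → x = 0 := by
  rcases hG with hG | hG
  · exact core hsp hG.2
  · have hsp' : ∀ x : Aᵐᵒᵖ, (∀ a, x * a * x = 0) → x = 0 := by
      intro x hx
      rw [← MulOpposite.op_unop x, ← MulOpposite.op_zero]
      congr 1
      refine hsp _ fun b => ?_
      have := hx (MulOpposite.op b)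
      apply_fun MulOpposite.unop at this
      simpa [mul_assoc] using this
    obtain ⟨L, hL1, hL2⟩ := core hsp' hG.2
    refine ⟨L.map opT, ?_, ?_⟩
    · intro P hP
      obtain ⟨Q, hQ, rfl⟩ := List.mem_map.mp hP
      exact opT_prime (hL1 Q hQ)
    · intro x hx
      have : MulOpposite.op x = 0 := hL2 _ fun P hP =>
        mem_opT.mp (hx _ (List.mem_map_of_mem hP))
      simpa using this

end St5Aux

namespace St5Aux

variable {A B : Type*} [Ring A] [Ring B]

/-- Preimage of a two-sided ideal along a ring hom. -/
def comapT (g : A →+* B) (P : TwoSidedIdeal B) : TwoSidedIdeal A :=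
  TwoSidedIdeal.mk' (g ⁻¹' (P : Set B))
    (by simp [Set.mem_preimage, P.zero_mem])
    (fun {a b} ha hb => by simpa [Set.mem_preimage] using P.add_mem ha hb)
    (fun {a} ha => by simpa [Set.mem_preimage] using P.neg_mem ha)
    (fun {c a} ha => by
      simp only [Set.mem_preimage, SetLike.mem_coe, map_mul] at *
      exact P.mul_mem_left _ _ ha)
    (fun {a c} ha => by
      simp only [Set.mem_preimage, SetLike.mem_coe, map_mul] at *
      exact P.mul_mem_right _ _ ha)

lemma mem_comapT {g : A →+* B} {P : TwoSidedIdeal B} {a : A} :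
    a ∈ comapT g P ↔ g a ∈ P :=
  TwoSidedIdeal.mem_mk' _ _ _ _ _ _ _

/-- Image of a two-sided ideal along a surjective ring hom. -/
def mapT (g : A →+* B) (hg : Function.Surjective g) (I : TwoSidedIdeal A) : TwoSidedIdeal B :=
  TwoSidedIdeal.mk' (g '' (I : Set A))
    ⟨0, I.zero_mem, map_zero g⟩
    (fun {a b} ha hb => by
      obtain ⟨x, hx, rfl⟩ := ha; obtain ⟨y, hy, rfl⟩ := hb
      exact ⟨x + y, I.add_mem hx hy, map_add g x y⟩)
    (fun {a} ha => by
      obtain ⟨x, hx, rfl⟩ := ha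
      exact ⟨-x, I.neg_mem hx, map_neg g x⟩)
    (fun {c a} ha => by
      obtain ⟨x, hx, rfl⟩ := ha
      obtain ⟨r, rfl⟩ := hg c
      exact ⟨r * x, I.mul_mem_left r x hx, map_mul g r x⟩)
    (fun {a c} ha => by
      obtain ⟨x, hx, rfl⟩ := ha
      obtain ⟨r, rfl⟩ := hg c
      exact ⟨x * r, I.mul_mem_right x r hx, map_mul g x r⟩)

lemma mem_mapT {g : A →+* B} {hg : Function.Surjective g} {I : TwoSidedIdeal A} {b : B} :
    b ∈ mapT g hg I ↔ b ∈ g '' (I : Set A) :=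
  TwoSidedIdeal.mem_mk' _ _ _ _ _ _ _

lemma comapT_prime {g : A →+* B} (hg : Function.Surjective g) {P : TwoSidedIdeal B}
    (hP : IsPrimeTwoSided P) : IsPrimeTwoSided (comapT g P) := by
  constructor
  · intro htop
    have h1 : (1 : A) ∈ comapT g P := htop ▸ TwoSidedIdeal.mem_top _
    rw [mem_comapT, map_one] at h1
    exact hP.1 (P.eq_top h1)
  · intro I J hIJ
    have := hP.2 (mapT g hg I) (mapT g hg J) ?_
    · rcases this with h | h
      · exact Or.inl fun a ha => mem_comapT.mpr (h (mem_mapT.mpr ⟨a, ha, rfl⟩))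
      · exact Or.inr fun b hb => mem_comapT.mpr (h (mem_mapT.mpr ⟨b, hb, rfl⟩))
    · intro a ha b hb
      obtain ⟨x, hx, rfl⟩ := mem_mapT.mp ha
      obtain ⟨y, hy, rfl⟩ := mem_mapT.mp hb
      rw [← map_mul]
      exact mem_comapT.mp (hIJ x hx y hy)

end St5Aux

namespace St5Aux

variable {A : Type*} [Ring A]

lemma subset_primeRad (X : Set A) : X ⊆ primeRad X := fun x hx P _ hXP => hXP hx

/-- The prime radical of a set, as a two-sided ideal. -/
def radIdeal (X : Set A) : TwoSidedIdeal A :=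
  TwoSidedIdeal.mk' (primeRad X)
    (fun P _ _ => P.zero_mem)
    (fun {a b} ha hb P hP hXP => P.add_mem (ha P hP hXP) (hb P hP hXP))
    (fun {a} ha P hP hXP => P.neg_mem (ha P hP hXP))
    (fun {c a} ha P hP hXP => P.mul_mem_left c a (ha P hP hXP))
    (fun {a c} ha P hP hXP => P.mul_mem_right a c (ha P hP hXP))

lemma mem_radIdeal {X : Set A} {a : A} : a ∈ radIdeal X ↔ a ∈ primeRad X :=
  TwoSidedIdeal.mem_mk' _ _ _ _ _ _ _

lemma radIdeal_coe (X : Set A) : (radIdeal X : Set A) = primeRad X :=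
  Set.ext fun _ => mem_radIdeal

lemma primeRad_radIdeal (X : Set A) :
    primeRad ((radIdeal X : TwoSidedIdeal A) : Set A) = ((radIdeal X : TwoSidedIdeal A) : Set A) := by
  rw [radIdeal_coe]
  ext a
  constructor
  · intro ha P hP hXP
    exact ha P hP fun y hy => hy P hP hXP
  · intro ha P hP hrP
    exact hrP ha

end St5Aux

namespace St5Aux

variable {R S : Type*} [Ring R] [Ring S] (f : R →+* S)

lemma one_mem_span_image {X : Set R} (h1 : (1 : R) ∈ X) (v : S) :
    v ∈ Ideal.span (f '' X) := by
  have h : (1 : S) ∈ Ideal.span (f '' X) := Submodule.subset_span ⟨1, h1, map_one f⟩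
  simpa using Submodule.smul_mem _ v h

lemma span_mulr {Y : Set R} {v : S} (hv : v ∈ Ideal.span (f '' Y)) (r : R) :
    v * f r ∈ Ideal.span (f '' {z | ∃ y ∈ Y, z = y * r}) := by
  induction hv using Submodule.span_induction with
  | mem x hx =>
      obtain ⟨y, hy, rfl⟩ := hx
      rw [← map_mul]
      exact Submodule.subset_span ⟨y * r, ⟨y, hy, rfl⟩, rfl⟩
  | zero => simp
  | add a b _ _ ha hb => rw [add_mul]; exact Submodule.add_mem _ ha hb
  | smul s x _ h =>
      rw [smul_eq_mul, mul_assoc, ← smul_eq_mul]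
      exact Submodule.smul_mem _ s h

lemma span_mul {Z Y : Set R} {T : ℕ}
    (hK : ∀ l : List S, l.length = T → (∀ x ∈ l, x ∈ f '' Z) → ∀ s : S,
      l.prod * s ∈ Ideal.span (f '' Y))
    {a : List S} (ha : a.length = T) (haZ : ∀ x ∈ a, x ∈ f '' Z) {X : Set R} {v : S}
    (hv : v ∈ Ideal.span (f '' X)) :
    a.prod * v ∈ Ideal.span (f '' {z | ∃ y ∈ Y, ∃ x ∈ X, z = y * x}) := by
  rw [Ideal.span, Submodule.mem_span_set'] at hv
  obtain ⟨n, c, gg, rfl⟩ := hv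
  rw [Finset.mul_sum]
  refine Submodule.sum_mem _ fun i _ => ?_
  obtain ⟨x, hxX, hgx⟩ : ∃ x ∈ X, f x = (gg i : S) := by
    obtain ⟨x, hx, hfx⟩ := (gg i).2
    exact ⟨x, hx, hfx⟩
  have h1 : a.prod * c i ∈ Ideal.span (f '' Y) := hK a ha haZ (c i)
  have h2 := span_mulr f h1 x
  have heq : a.prod * (c i • (gg i : S)) = (a.prod * c i) * f x := by
    rw [smul_eq_mul, hgx, mul_assoc]
  rw [heq]
  refine Ideal.span_mono (Set.image_mono ?_) h2
  rintro z ⟨y, hy, rfl⟩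
  exact ⟨y, hy, x, hxX, rfl⟩

/-- The set of ordered products `q₁ ⋯ q_k` with `q_i` in the i-th ideal of the list. -/
def PSetL : List (TwoSidedIdeal R) → Set R
  | [] => {1}
  | Q :: L => {z | ∃ y ∈ (Q : Set R), ∃ x ∈ PSetL L, z = y * x}

lemma PSetL_mem_all : ∀ {L : List (TwoSidedIdeal R)} {x : R}, x ∈ PSetL L →
    ∀ Q ∈ L, x ∈ Q := by
  intro L
  induction L with
  | nil => simp
  | cons Q L ih =>
      rintro x ⟨y, hy, z, hz, rfl⟩ Q' hQ'
      rcases List.mem_cons.mp hQ' with rfl | h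
      · exact Q'.mul_mem_right y z hy
      · exact Q'.mul_mem_left y z (ih hz Q' h)

lemma chain (Nc : Set R) (L : List (TwoSidedIdeal R))
    (hL : ∀ Q ∈ L, Nc ⊆ (Q : Set R) ∧ ∃ t, 0 < t ∧
      ∀ l : List S, l.length = t → (∀ x ∈ l, x ∈ f '' (Q : Set R)) → ∀ s : S,
        l.prod * s ∈ Ideal.span (f '' (Q : Set R))) :
    ∃ T, (L = [] ∨ 0 < T) ∧ ∀ l : List S, l.length = T → (∀ x ∈ l, x ∈ f '' Nc) → ∀ s : S,
      l.prod * s ∈ Ideal.span (f '' PSetL L) := by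
  induction L with
  | nil =>
      refine ⟨0, Or.inl rfl, fun l hl _ s => ?_⟩
      have hl0 : l = [] := List.length_eq_zero_iff.mp hl
      subst hl0
      simp only [List.prod_nil, one_mul]
      exact one_mem_span_image f (show (1 : R) ∈ PSetL [] from rfl) s
  | cons Q L ih =>
      obtain ⟨hNQ, t, ht, hprop⟩ := hL Q List.mem_cons_self
      obtain ⟨T', _, hmain⟩ := ih fun Q' hQ' => hL Q' (List.mem_cons_of_mem _ hQ')
      refine ⟨t + T', Or.inr (by omega), ?_⟩
      intro l hl hlN s
      have hlen1 : (l.take t).length = t := by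
        rw [List.length_take, hl]; omega
      have hlen2 : (l.drop t).length = T' := by
        rw [List.length_drop, hl]; omega
      have hprod : l.prod = (l.take t).prod * (l.drop t).prod := by
        conv_lhs => rw [← List.take_append_drop t l]
        rw [List.prod_append]
      rw [hprod, mul_assoc]
      have hv : (l.drop t).prod * s ∈ Ideal.span (f '' PSetL L) :=
        hmain _ hlen2 (fun x hx => hlN x (List.drop_subset t l hx)) s
      have haZ : ∀ x ∈ l.take t, x ∈ f '' (Q : Set R) := fun x hx =>
        Set.image_mono hNQ (hlN x (List.take_subset t l hx))
      exact span_mul f hprop hlen1 haZ hv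

/-- Products of `m` elements of `Nc`. -/
def PPow (Nc : Set R) : ℕ → Set R
  | 0 => {1}
  | m + 1 => {z | ∃ y ∈ Nc, ∃ x ∈ PPow Nc m, z = y * x}

lemma PPow_exists_list {Nc : Set R} : ∀ {m : ℕ} {x : R}, x ∈ PPow Nc m →
    ∃ l : List R, l.length = m ∧ (∀ z ∈ l, z ∈ Nc) ∧ l.prod = x := by
  intro m
  induction m with
  | zero =>
      rintro x rfl
      exact ⟨[], rfl, by simp, rfl⟩
  | succ m ih =>
      rintro x ⟨y, hy, z, hz, rfl⟩
      obtain ⟨l, hlen, hmem, rfl⟩ := ih hz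
      refine ⟨y :: l, by simp [hlen], ?_, by simp⟩
      intro w hw
      rcases List.mem_cons.mp hw with rfl | h
      exacts [hy, hmem w h]

lemma powChain (Nc : Set R) {T : ℕ}
    (hK : ∀ l : List S, l.length = T → (∀ x ∈ l, x ∈ f '' Nc) → ∀ s : S,
      l.prod * s ∈ Ideal.span (f '' Nc)) :
    ∀ (m : ℕ) (l : List S), l.length = m * T → (∀ x ∈ l, x ∈ f '' Nc) → ∀ s : S,
      l.prod * s ∈ Ideal.span (f '' PPow Nc m) := by
  intro m
  induction m with
  | zero =>
      intro l hl _ s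
      have hl0 : l = [] := List.length_eq_zero_iff.mp (by simpa using hl)
      subst hl0
      simp only [List.prod_nil, one_mul]
      exact one_mem_span_image f (show (1 : R) ∈ PPow Nc 0 from rfl) s
  | succ m ih =>
      intro l hl hlN s
      rw [Nat.succ_mul] at hl
      have hlen1 : (l.take T).length = T := by
        rw [List.length_take, hl]
        exact Nat.min_eq_left (Nat.le_add_left T (m * T))
      have hlen2 : (l.drop T).length = m * T := by
        rw [List.length_drop, hl, Nat.add_sub_cancel]
      have hprod : l.prod = (l.take T).prod * (l.drop T).prod := by
        conv_lhs => rw [← List.take_append_drop T l]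
        rw [List.prod_append]
      rw [hprod, mul_assoc]
      have hv : (l.drop T).prod * s ∈ Ideal.span (f '' PPow Nc m) :=
        ih _ hlen2 (fun x hx => hlN x (List.drop_subset T l hx)) s
      exact span_mul f hK hlen1 (fun x hx => hlN x (List.take_subset T l hx)) hv

end St5Aux

/-- If every semiprime factor ring of `R` is left or right Goldie and
the prime radical of every factor ring of `R` is nilpotent, then the following are
equivalent: (i) for each prime ideal `Q` of `R` there is `t > 0` with
`f(Q)^t S ⊆ S f(Q)`; (ii) for each ideal `I` of `R` there is `t > 0` with
`f(I)^t S ⊆ S f(I)`. (The inclusions are expressed on generators: every product of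
`t` elements of the image times any element of `S` lies in the corresponding left
ideal; this is equivalent since left ideals are closed under addition.) -/
theorem statement_5 {R S : Type*} [Ring R] [Ring S] (f : R →+* S)
    (hRG : SemiprimeFactorsGoldie R) (hRN : FactorRadsNilpotent R) :
    (∀ Q : TwoSidedIdeal R, IsPrimeTwoSided Q → ∃ t : ℕ, 0 < t ∧
        ∀ l : List S, l.length = t → (∀ x ∈ l, x ∈ f '' (Q : Set R)) →
          ∀ s : S, l.prod * s ∈ Ideal.span (f '' (Q : Set R))) ↔
    (∀ I : TwoSidedIdeal R, ∃ t : ℕ, 0 < t ∧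
        ∀ l : List S, l.length = t → (∀ x ∈ l, x ∈ f '' (I : Set R)) →
          ∀ s : S, l.prod * s ∈ Ideal.span (f '' (I : Set R))) := by
  constructor
  · intro hi I
    classical
    set N : TwoSidedIdeal R := St5Aux.radIdeal (I : Set R) with hN
    have hNcoe : (N : Set R) = primeRad (I : Set R) := St5Aux.radIdeal_coe _
    have hIN : (I : Set R) ⊆ (N : Set R) := by
      rw [hNcoe]; exact St5Aux.subset_primeRad _
    have hNle : ∀ P : TwoSidedIdeal R, IsPrimeTwoSided P → (I : Set R) ⊆ (P : Set R) →
        (N : Set R) ⊆ (P : Set R) := by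
      intro P hP hIP x hx
      rw [hNcoe] at hx
      exact hx P hP hIP
    set π : R →+* N.ringCon.Quotient := N.ringCon.mk' with hπ
    have hπsurj : Function.Surjective π := fun q => Quotient.inductionOn' q fun r => ⟨r, rfl⟩
    have hker : ∀ x : R, π x = 0 ↔ x ∈ N := by
      intro x
      rw [TwoSidedIdeal.mem_iff]
      exact RingCon.eq N.ringCon
    have hsp : ∀ x : N.ringCon.Quotient, (∀ a, x * a * x = 0) → x = 0 := by
      intro x hx
      obtain ⟨r, rfl⟩ := hπsurj x
      rw [hker]
      rw [hN, St5Aux.mem_radIdeal]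
      intro P hP hIP
      have hmid : ∀ a : R, r * a * r ∈ P := by
        intro a
        have h0 : π (r * a * r) = 0 := by
          rw [map_mul, map_mul]
          exact hx (π a)
        exact hNle P hP hIP ((hker _).mp h0)
      rcases St5Aux.prime_mem_or_mem hP hmid with h | h
      exacts [h, h]
    have hGold : LeftOrRightGoldie N.ringCon.Quotient :=
      hRG N (St5Aux.primeRad_radIdeal (I : Set R))
    obtain ⟨Lb, hLb1, hLb2⟩ := St5Aux.core' hsp hGold
    set L : List (TwoSidedIdeal R) := Lb.map (St5Aux.comapT π) with hL
    have hLprime : ∀ Q ∈ L, IsPrimeTwoSided Q ∧ (I : Set R) ⊆ (Q : Set R) := by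
      intro Q hQ
      obtain ⟨Pb, hPb, rfl⟩ := List.mem_map.mp hQ
      refine ⟨St5Aux.comapT_prime hπsurj (hLb1 Pb hPb), ?_⟩
      intro x hx
      have h0 : π x = 0 := (hker x).mpr (hIN hx)
      show x ∈ St5Aux.comapT π Pb
      rw [St5Aux.mem_comapT, h0]
      exact Pb.zero_mem
    have hLN : ∀ x : R, (∀ Q ∈ L, x ∈ Q) → x ∈ N := by
      intro x hx
      have h0 : π x = 0 := hLb2 (π x) fun Pb hPb =>
        St5Aux.mem_comapT.mp (hx _ (List.mem_map_of_mem hPb))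
      exact (hker x).mp h0
    obtain ⟨n, hn, hnil0⟩ := hRN I
    set ρ : R →+* I.ringCon.Quotient := I.ringCon.mk' with hρ
    have hρsurj : Function.Surjective ρ := fun q => Quotient.inductionOn' q fun r => ⟨r, rfl⟩
    have hρker : ∀ x : R, ρ x = 0 ↔ x ∈ I := by
      intro x
      rw [TwoSidedIdeal.mem_iff]
      exact RingCon.eq I.ringCon
    have hnil : ∀ l : List R, l.length = n → (∀ x ∈ l, x ∈ (N : Set R)) → l.prod ∈ I := by
      intro l hlen hlN
      rw [← hρker]
      rw [map_list_prod ρ l]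
      apply hnil0
      · simp [hlen]
      · intro x hx
        obtain ⟨y, hy, rfl⟩ := List.mem_map.mp hx
        intro Pb hPb _
        have hQ : IsPrimeTwoSided (St5Aux.comapT ρ Pb) := St5Aux.comapT_prime hρsurj hPb
        have hIQ : (I : Set R) ⊆ (St5Aux.comapT ρ Pb : Set R) := by
          intro z hz
          show z ∈ St5Aux.comapT ρ Pb
          rw [St5Aux.mem_comapT, (hρker z).mpr hz]
          exact Pb.zero_mem
        have hyN : y ∈ primeRad (I : Set R) := by
          have := hlN y hy
          rwa [hNcoe] at this
        exact St5Aux.mem_comapT.mp (hyN _ hQ hIQ)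
    have hLhyp : ∀ Q ∈ L, (N : Set R) ⊆ (Q : Set R) ∧ ∃ t, 0 < t ∧
        ∀ l : List S, l.length = t → (∀ x ∈ l, x ∈ f '' (Q : Set R)) → ∀ s : S,
          l.prod * s ∈ Ideal.span (f '' (Q : Set R)) := by
      intro Q hQ
      obtain ⟨hQp, hQI⟩ := hLprime Q hQ
      exact ⟨hNle Q hQp hQI, hi Q hQp⟩
    obtain ⟨T0, hT0, hchain⟩ := St5Aux.chain f (N : Set R) L hLhyp
    have hPSsub : St5Aux.PSetL L ⊆ (N : Set R) := fun x hx => hLN x (St5Aux.PSetL_mem_all hx)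
    obtain ⟨T, hTpos, hKey⟩ : ∃ T, 0 < T ∧ ∀ l : List S, l.length = T →
        (∀ x ∈ l, x ∈ f '' (N : Set R)) → ∀ s : S,
          l.prod * s ∈ Ideal.span (f '' (N : Set R)) := by
      rcases hT0 with hLnil | hTpos
      · have hall : (1 : R) ∈ (N : Set R) := hLN 1 (by simp [hLnil])
        exact ⟨1, one_pos, fun l _ _ s => St5Aux.one_mem_span_image f hall (l.prod * s)⟩
      · exact ⟨T0, hTpos, fun l hl hlN s =>
          Ideal.span_mono (Set.image_mono hPSsub) (hchain l hl hlN s)⟩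
    refine ⟨n * T, Nat.mul_pos hn hTpos, ?_⟩
    intro l hl hlI s
    have hlN : ∀ x ∈ l, x ∈ f '' (N : Set R) := fun x hx => Set.image_mono hIN (hlI x hx)
    have hmem := St5Aux.powChain f (N : Set R) hKey n l hl hlN s
    refine Ideal.span_mono (Set.image_mono ?_) hmem
    intro x hx
    obtain ⟨l', hlen, hmemN, rfl⟩ := St5Aux.PPow_exists_list hx
    exact hnil l' hlen hmemN
  · intro h2 Q _
    exact h2 Q
end
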